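/- arXiv:1107.5094 — 7 statements merged into one kernel-verified Lean document; each statement's English description precedes it below -/
import Mathlib

section
/- Let M = (E, F) be a matroid with closure operator σ. For two independent sets S, T ∈ F, one has σ(S) = σ(T) if and only if the set of independent sets U with U ∩ S = ∅ and U ∪ S independent equals the set of independent sets U with U ∩ T = ∅ and U ∪ T independent. -/
/-!
For independent `S`, the sets `U` in question are exactly the independent sets of the contraction
`M ／ S`. The non-loops of `M ／ C` are the elements of `M.E \ M.closure C`, so its independent sets
determine the closure; conversely, deleting the loops `M.closure C \ C` of `M ／ C` does not change
its independent sets and leaves `M ／ M.closure C`.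
-/

open Set

namespace Matroid

variable {α : Type*} {M : Matroid α}

lemma Indep.contract_indep_iff_inter_eq_empty {I J : Set α} (hI : M.Indep I) :
    (M ／ I).Indep J ↔ M.Indep J ∧ J ∩ I = ∅ ∧ M.Indep (J ∪ I) := by
  rw [hI.contract_indep_iff, disjoint_iff_inter_eq_empty]
  exact ⟨fun ⟨hdj, hJI⟩ ↦ ⟨hJI.subset subset_union_left, hdj, hJI⟩,
    fun ⟨_, hdj, hJI⟩ ↦ ⟨hdj, hJI⟩⟩

lemma contract_indep_iff_contract_closure_indep {C J : Set α} :
    (M ／ C).Indep J ↔ (M ／ M.closure C).Indep J := by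
  rw [contract_closure_eq_contract_delete, delete_indep_iff, iff_self_and, ← contract_loops_eq]
  exact Indep.disjoint_loops

lemma contract_indep_eq_iff_closure_eq (M : Matroid α) (C D : Set α) :
    (M ／ C).Indep = (M ／ D).Indep ↔ M.closure C = M.closure D := by
  refine ⟨fun h ↦ ?_, fun h ↦ ?_⟩
  · have hnonloops : M.E \ M.closure C = M.E \ M.closure D := by
      ext e
      rw [← contract_isNonloop_iff, ← contract_isNonloop_iff, ← indep_singleton,
        ← indep_singleton, h]
    rw [← sdiff_sdiff_cancel_left (M.closure_subset_ground C), hnonloops,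
      sdiff_sdiff_cancel_left (M.closure_subset_ground D)]
  · ext J
    rw [contract_indep_iff_contract_closure_indep, h, ← contract_indep_iff_contract_closure_indep]

end Matroid

theorem closure_eq_iff_compatible_indep_sets_eq_general {α : Type*} (M : Matroid α)
    {S T : Set α} (hS : M.Indep S) (hT : M.Indep T) :
    M.closure S = M.closure T ↔
      {U : Set α | M.Indep U ∧ U ∩ S = ∅ ∧ M.Indep (U ∪ S)} =
        {U : Set α | M.Indep U ∧ U ∩ T = ∅ ∧ M.Indep (U ∪ T)} := by
  have compatible_eq {I : Set α} (hI : M.Indep I) :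
      {U : Set α | M.Indep U ∧ U ∩ I = ∅ ∧ M.Indep (U ∪ I)} = {U | (M.contract I).Indep U} :=
    ext fun _ ↦ hI.contract_indep_iff_inter_eq_empty.symm
  rw [compatible_eq hS, compatible_eq hT, ofPred_inj,
    Matroid.contract_indep_eq_iff_closure_eq]

/-- For independent sets `S, T` of a matroid `M` on a finite ground set,
`σ(S) = σ(T)` iff the set of independent sets `U` disjoint from `S` with `U ∪ S`
independent coincides with the corresponding set for `T`. -/
theorem closure_eq_iff_compatible_indep_sets_eq {α : Type*} (M : Matroid α) [M.Finite]
    {S T : Set α} (hS : M.Indep S) (hT : M.Indep T) :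
    M.closure S = M.closure T ↔
      {U : Set α | M.Indep U ∧ U ∩ S = ∅ ∧ M.Indep (U ∪ S)} =
        {U : Set α | M.Indep U ∧ U ∩ T = ∅ ∧ M.Indep (U ∪ T)} :=
  closure_eq_iff_compatible_indep_sets_eq_general M hS hT
end

section
/- Let M be a matroid with rank function r and closure σ on finite ground set E. Suppose A, A', B, B' are independent sets with σ(A) = σ(A'), σ(B) = σ(B'), and set C = A ∩ B, Â = A \ C, B̂ = B \ C. If A' ∪ B̂ is independent and A' ∩ B̂ = ∅, then B' ∪ Â is independent and B' ∩ Â = ∅. -/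
/-!
Both `A' ∪ (B \ A)` and `B' ∪ (A \ B)` span `A ∪ B`, and independent sets with equal closures
have equal size, so `|B'| + |A \ B| = |A| + |B \ A| = |A'| + |B \ A| = r(A ∪ B)`. A union whose
rank reaches the sum of the sizes of its parts is independent and disjoint.
-/

open Set

namespace Matroid

variable {α : Type*} {M : Matroid α} {I J X Y : Set α}

lemma Indep.encard_eq_of_closure_eq (hI : M.Indep I) (hJ : M.Indep J)
    (h : M.closure I = M.closure J) : I.encard = J.encard := by
  rw [← hI.eRk_eq_encard, ← hJ.eRk_eq_encard, ← M.eRk_closure_eq, h, M.eRk_closure_eq]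

lemma eRk_union_congr_left (h : M.closure X = M.closure J) (Y : Set α) :
    M.eRk (X ∪ Y) = M.eRk (J ∪ Y) := by
  rw [← M.eRk_union_closure_left_eq, h, M.eRk_union_closure_left_eq]

lemma indep_union_and_disjoint_of_encard_add_le_eRk (hX : X.Finite) (hY : Y.Finite)
    (h : X.encard + Y.encard ≤ M.eRk (X ∪ Y)) : M.Indep (X ∪ Y) ∧ Disjoint X Y := by
  have hunion : (X ∪ Y).encard = X.encard + Y.encard :=
    le_antisymm (encard_union_le X Y) (h.trans (M.eRk_le_encard _))
  refine ⟨(indep_iff_eRk_eq_encard_of_finite (hX.union hY)).2 ?_, ?_⟩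
  · exact le_antisymm (M.eRk_le_encard _) (hunion ▸ h)
  · rw [← ncard_union_eq_iff hX hY, ← Nat.cast_inj (R := ℕ∞), Nat.cast_add,
      hX.cast_ncard_eq, hY.cast_ncard_eq, (hX.union hY).cast_ncard_eq, hunion]

end Matroid

open Matroid in
/-- Let `A, A', B, B'` be independent sets with `σ(A) = σ(A')`,
`σ(B) = σ(B')`, and set `C = A ∩ B`, `Â = A \ C`, `B̂ = B \ C`. If `A' ∪ B̂` is
independent and `A' ∩ B̂ = ∅`, then `B' ∪ Â` is independent and `B' ∩ Â = ∅`. -/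
theorem indep_union_symm_of_closure_eq {α : Type*} (M : Matroid α) [M.Finite]
    {A A' B B' : Set α} (hA : M.Indep A) (hA' : M.Indep A') (hB : M.Indep B)
    (hB' : M.Indep B') (hAA' : M.closure A = M.closure A')
    (hBB' : M.closure B = M.closure B')
    (h1 : M.Indep (A' ∪ (B \ (A ∩ B)))) (h2 : A' ∩ (B \ (A ∩ B)) = ∅) :
    M.Indep (B' ∪ (A \ (A ∩ B))) ∧ B' ∩ (A \ (A ∩ B)) = ∅ := by
  rw [sdiff_inter_self_eq_sdiff] at h1 h2
  rw [sdiff_self_inter, ← disjoint_iff_inter_eq_empty]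
  have hrank : M.eRk (B' ∪ (A \ B)) = M.eRk (A' ∪ (B \ A)) := by
    rw [← eRk_union_congr_left hBB', ← eRk_union_congr_left hAA', union_sdiff_self,
      union_sdiff_self, union_comm]
  have hcard : (A' ∪ (B \ A)).encard = B'.encard + (A \ B).encard := by
    rw [encard_union_eq (disjoint_iff_inter_eq_empty.2 h2),
      ← hA.encard_eq_of_closure_eq hA' hAA', ← hB.encard_eq_of_closure_eq hB' hBB',
      add_comm, encard_sdiff_add_encard, add_comm, encard_sdiff_add_encard, union_comm]
  exact indep_union_and_disjoint_of_encard_add_le_eRk hB'.finite hA.finite.sdiff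
    (by rw [hrank, h1.eRk_eq_encard, hcard])
end

section
/- Let L be a finite geometric lattice (atomic and upper semimodular, graded by its rank function). If L is modular, then the number of atoms of L equals the number of coatoms of L. -/
/-!
If an atom `a` does not lie below a coatom `c`, then `c` and `a` are complements, and
modularity gives `Set.Iic c ≃o Set.Ici a`. Induction on the size of the lattice, applied to
`Set.Iic c`, then shows that the number of coatoms above `a` equals the number of atoms below `c`.
The conclusion follows from a de Bruijn–Erdős double count over the pairs `(a, c)` with `a ≰ c`.
Let `n` be the number of atoms, `m` the number of coatoms and `d` the common degree of such a
pair. Summing `m / (m - d)` over these pairs gives `n m`, and so does summing `n / (n - d)`.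
Since `x ↦ x / (x - d)` is decreasing, this forces `m = n`.
-/

open Finset

section Field

variable {K : Type*} [Field K] [LinearOrder K] [IsStrictOrderedRing K] {d k l : K}

theorem add_div_le_add_div_of_le (hd : 0 ≤ d) (hk : 0 < k) (hkl : k ≤ l) :
    (d + l) / l ≤ (d + k) / k := by
  rw [add_div, add_div, div_self (hk.trans_le hkl).ne', div_self hk.ne']
  gcongr

theorem add_div_lt_add_div_of_lt (hd : 0 < d) (hk : 0 < k) (hkl : k < l) :
    (d + l) / l < (d + k) / k := by
  rw [add_div, add_div, div_self (hk.trans hkl).ne', div_self hk.ne']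
  gcongr

end Field

section DoubleCounting

variable {α β : Type*} [Fintype α] [Fintype β] (s : α → β → Prop) [DecidableRel s] (c : ℚ)

theorem sum_filter_div_card_filter_fst (hs : ∀ a, ∃ b, s a b) :
    ∑ p : α × β with s p.1 p.2, c / #{b | s p.1 b} = Fintype.card α * c := by
  have hcard (a : α) : (#{b | s a b} : ℚ) ≠ 0 := by
    exact_mod_cast (card_pos.2 <| (hs a).imp fun b hb => by simpa using hb).ne'
  rw [sum_filter, Fintype.sum_prod_type]
  simp_rw [← sum_filter, sum_const, nsmul_eq_mul, mul_div_cancel₀ c (hcard _)]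
  simp

theorem sum_filter_div_card_filter_snd (hs : ∀ b, ∃ a, s a b) :
    ∑ p : α × β with s p.1 p.2, c / #{a | s a p.2} = Fintype.card β * c := by
  have hcard (b : β) : (#{a | s a b} : ℚ) ≠ 0 := by
    exact_mod_cast (card_pos.2 <| (hs b).imp fun a ha => by simpa using ha).ne'
  rw [sum_filter, Fintype.sum_prod_type, sum_comm]
  simp_rw [← sum_filter, sum_const, nsmul_eq_mul, mul_div_cancel₀ c (hcard _)]
  simp

end DoubleCounting

section Incidence

variable {α β : Type*} [Finite α] [Finite β] {r : α → β → Prop}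

theorem card_le_card_of_degree_eq_of_not_rel (hα : ∀ a, ∃ b, ¬ r a b) (hβ : ∀ b, ∃ a, ¬ r a b)
    (hr : ∃ a b, r a b)
    (hdeg : ∀ a b, ¬ r a b → Nat.card {b' // r a b'} = Nat.card {a' // r a' b}) :
    Nat.card α ≤ Nat.card β := by
  classical
  have := Fintype.ofFinite α
  have := Fintype.ofFinite β
  simp only [Nat.card_eq_fintype_card, Fintype.card_subtype] at hdeg ⊢
  set n := Fintype.card α
  set m := Fintype.card β
  by_contra! hmn
  set k : α → ℕ := fun a => #{b | ¬ r a b}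
  set l : β → ℕ := fun b => #{a | ¬ r a b}
  set N : Finset (α × β) := {p | ¬ r p.1 p.2}
  have hk_add (a : α) : #{b | r a b} + k a = m := card_filter_add_card_filter_not _
  have hl_add (b : β) : #{a | r a b} + l b = n := card_filter_add_card_filter_not _
  have hk_pos (a : α) : (0 : ℚ) < k a := by
    exact_mod_cast card_pos.2 <| (hα a).imp fun b hb => by simpa using hb
  have hrows : ∑ p ∈ N, (m : ℚ) / k p.1 = n * m :=
    sum_filter_div_card_filter_fst (fun a b => ¬ r a b) _ hα
  have hcols : ∑ p ∈ N, (n : ℚ) / l p.2 = n * m := by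
    rw [sum_filter_div_card_filter_snd (fun a b => ¬ r a b) _ hβ, mul_comm]
  -- For `p ∈ N` with common degree `d`, the two terms are `(d + l) / l` and `(d + k) / k`.
  have hterm : ∀ p ∈ N, (n : ℚ) / l p.2 ≤ m / k p.1 ∧
      (0 < #{b | r p.1 b} → (n : ℚ) / l p.2 < m / k p.1) := by
    intro p hp
    have hdeg_p := hdeg p.1 p.2 (mem_filter.1 hp).2
    have hkl : k p.1 < l p.2 := by
      have := hk_add p.1
      have := hl_add p.2
      omega
    rw [← hk_add p.1, ← hl_add p.2, ← hdeg_p]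
    push_cast
    exact ⟨add_div_le_add_div_of_le (by positivity) (hk_pos _) (by exact_mod_cast hkl.le),
      fun hd => add_div_lt_add_div_of_lt (by exact_mod_cast hd) (hk_pos _) (by exact_mod_cast hkl)⟩
  obtain ⟨a, b, hab⟩ := hr
  obtain ⟨b', hab'⟩ := hα a
  have hmem : (a, b') ∈ N := by simpa [N] using hab'
  have := sum_lt_sum (fun p hp => (hterm p hp).1)
    ⟨(a, b'), hmem, (hterm _ hmem).2 (card_pos.2 ⟨b, by simpa using hab⟩)⟩
  linarith

theorem card_eq_card_of_degree_eq_of_not_rel (hα : ∀ a, ∃ b, ¬ r a b) (hβ : ∀ b, ∃ a, ¬ r a b)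
    (hr : ∃ a b, r a b)
    (hdeg : ∀ a b, ¬ r a b → Nat.card {b' // r a b'} = Nat.card {a' // r a' b}) :
    Nat.card α = Nat.card β :=
  (card_le_card_of_degree_eq_of_not_rel hα hβ hr hdeg).antisymm <|
    card_le_card_of_degree_eq_of_not_rel (r := flip r) hβ hα
      (let ⟨a, b, h⟩ := hr; ⟨b, a, h⟩) fun b a h => (hdeg a b h).symm

end Incidence

theorem Set.Ici.card_isCoatom {α : Type*} [PartialOrder α] [OrderTop α] (a : α) :
    Nat.card {x : Set.Ici a // IsCoatom x} = Nat.card {c : {c : α // IsCoatom c} // a ≤ c} :=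
  Nat.card_congr
    { toFun x := ⟨⟨x.1, x.2.of_isCoatom_coe_Ici⟩, x.1.2⟩
      invFun c := ⟨⟨c.1, c.2⟩, c.1.2.Ici c.2⟩
      left_inv _ := rfl
      right_inv _ := rfl }

theorem Set.Iic.card_isAtom {α : Type*} [PartialOrder α] [OrderBot α] (c : α) :
    Nat.card {x : Set.Iic c // IsAtom x} = Nat.card {a : {a : α // IsAtom a} // a ≤ c} :=
  Nat.card_congr
    { toFun x := ⟨⟨x.1, x.2.of_isAtom_coe_Iic⟩, x.1.2⟩
      invFun a := ⟨⟨a.1, a.2⟩, a.1.2.Iic a.2⟩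
      left_inv _ := rfl
      right_inv _ := rfl }

section BoundedLattice

variable {α : Type*} [Lattice α] [BoundedOrder α]

theorem IsCoatom.isCompl_of_not_le {a c : α} (hc : IsCoatom c) (ha : IsAtom a) (hac : ¬ a ≤ c) :
    IsCompl c a :=
  ⟨(ha.not_le_iff_disjoint.1 hac).symm, hc.not_le_iff_codisjoint.1 hac⟩

theorem IsAtom.exists_isCoatom_not_le [ComplementedLattice α] [IsCoatomic α] {a : α}
    (ha : IsAtom a) : ∃ c, IsCoatom c ∧ ¬ a ≤ c := by
  obtain ⟨b, hab⟩ := exists_isCompl a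
  obtain hb | ⟨c, hc, hbc⟩ := eq_top_or_exists_le_coatom b
  · exact absurd (by simpa [hb] using hab.inf_eq_bot) ha.1
  · exact ⟨c, hc, fun hac => hc.1 (top_le_iff.1 (hab.sup_eq_top ▸ sup_le hac hbc))⟩

theorem IsCoatom.exists_isAtom_not_le [ComplementedLattice α] [IsAtomic α] {c : α}
    (hc : IsCoatom c) : ∃ a, IsAtom a ∧ ¬ a ≤ c :=
  IsAtom.exists_isCoatom_not_le (α := αᵒᵈ) hc

theorem card_isAtom_eq_card_isCoatom_of_forall_not_le [IsAtomic α] [IsCoatomic α]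
    (h : ∀ a c : α, IsAtom a → IsCoatom c → ¬ a ≤ c) :
    Nat.card {a : α // IsAtom a} = Nat.card {c : α // IsCoatom c} := by
  have hatom (a : α) (ha : IsAtom a) : a = ⊤ :=
    (eq_top_or_exists_le_coatom a).resolve_right fun ⟨c, hc, hac⟩ => h a c ha hc hac
  have hcoatom (c : α) (hc : IsCoatom c) : c = ⊥ :=
    (eq_bot_or_exists_atom_le c).resolve_right fun ⟨a, ha, hac⟩ => h a c ha hc hac
  have : Subsingleton {a : α // IsAtom a} :=
    ⟨fun a b => Subtype.ext ((hatom a a.2).trans (hatom b b.2).symm)⟩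
  have : Subsingleton {c : α // IsCoatom c} :=
    ⟨fun a b => Subtype.ext ((hcoatom a a.2).trans (hcoatom b b.2).symm)⟩
  refine Nat.card_congr (equivOfSubsingletonOfSubsingleton (fun a => ⟨⊥, ?_⟩) fun c => ⟨⊤, ?_⟩)
  · exact covBy_top_iff.1 (bot_covBy_iff.2 (hatom a a.2 ▸ a.2))
  · exact bot_covBy_iff.1 (covBy_top_iff.2 (hcoatom c c.2 ▸ c.2))

theorem ComplementedLattice.of_isAtomistic [Finite α] [IsModularLattice α] [IsAtomistic α] :
    ComplementedLattice α := by
  have := Fintype.ofFinite α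
  let := Fintype.toCompleteLattice α
  have := CompleteLattice.isCompactlyGenerated_of_wellFoundedGT (α := α)
  exact complementedLattice_of_isAtomistic

theorem IsModularLattice.card_isAtom_eq_card_isCoatom [Finite α] [IsModularLattice α]
    [ComplementedLattice α] : Nat.card {a : α // IsAtom a} = Nat.card {c : α // IsCoatom c} := by
  induction h : Nat.card α using Nat.strong_induction_on generalizing α with
  | _ n ih =>
  by_cases hinc : ∃ a c : α, IsAtom a ∧ IsCoatom c ∧ a ≤ c
  swap
  · push Not at hinc
    exact card_isAtom_eq_card_isCoatom_of_forall_not_le hinc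
  obtain ⟨a, c, ha, hc, hac⟩ := hinc
  refine card_eq_card_of_degree_eq_of_not_rel (r := fun a c => a.1 ≤ c.1)
    (fun a => ?_) (fun c => ?_) ⟨⟨a, ha⟩, ⟨c, hc⟩, hac⟩ fun a c hac => ?_
  · obtain ⟨c, hc, hac⟩ := a.2.exists_isCoatom_not_le
    exact ⟨⟨c, hc⟩, hac⟩
  · obtain ⟨a, ha, hac⟩ := c.2.exists_isAtom_not_le
    exact ⟨⟨a, ha⟩, hac⟩
  · have hcard : Nat.card (Set.Iic c.1) < n :=
      h ▸ Finite.card_subtype_lt (x := ⊤) fun htop => c.2.1 (top_le_iff.1 htop)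
    rw [← Set.Ici.card_isCoatom, ← Set.Iic.card_isAtom, ih _ hcard rfl]
    let e := (c.2.isCompl_of_not_le a.2 hac).IicOrderIsoIci
    exact Nat.card_congr (e.toEquiv.subtypeEquiv fun x => (e.isCoatom_iff x).symm).symm

end BoundedLattice

theorem strictMono_of_covBy_add_one {α : Type*} [PartialOrder α] [Finite α] {r : α → ℕ}
    (hr : ∀ x y, x ⋖ y → r y = r x + 1) : StrictMono r := by
  classical
  have := Fintype.ofFinite α
  have := Fintype.toLocallyFiniteOrder (α := α)
  exact (strictMono_iff_forall_covBy r).2 fun x y hxy => by simp [hr x y hxy]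

theorem IsModularLattice.of_strictMono {α : Type*} [Lattice α] {r : α → ℕ} (hr : StrictMono r)
    (hmod : ∀ x y, r x + r y = r (x ⊓ y) + r (x ⊔ y)) : IsModularLattice α where
  sup_inf_le_assoc_of_le {x} y {z} hxz := by
    have hle : x ⊔ y ⊓ z ≤ (x ⊔ y) ⊓ z :=
      le_inf (sup_le_sup_left inf_le_left x) (sup_le hxz inf_le_right)
    refine (hle.eq_of_not_lt fun hlt => ?_).ge
    have := hr hlt
    have h₁ := hmod x (y ⊓ z)
    have h₂ := hmod (x ⊔ y) z
    have h₃ := hmod x y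
    have h₄ := hmod y z
    rw [← inf_assoc, inf_right_comm, inf_eq_left.2 hxz] at h₁
    rw [sup_right_comm, sup_eq_right.2 hxz, sup_comm z y] at h₂
    omega

theorem card_atoms_eq_card_coatoms_of_modular_general {L : Type*} [Lattice L] [BoundedOrder L]
    [Fintype L] (r : L → ℕ)
    (hcov : ∀ x y : L, x ⋖ y → r y = r x + 1)
    (hatomic : ∀ x : L, ∃ S : Finset L, (∀ a ∈ S, IsAtom a) ∧ x = S.sup id)
    (hmod : ∀ x y : L, r x + r y = r (x ⊓ y) + r (x ⊔ y)) :
    Nat.card {a : L // IsAtom a} = Nat.card {a : L // IsCoatom a} := by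
  have : IsModularLattice L := .of_strictMono (strictMono_of_covBy_add_one hcov) hmod
  have : IsAtomistic L :=
    ⟨fun x => let ⟨S, hS, hx⟩ := hatomic x; ⟨S, hx ▸ isLUB_sup_id, hS⟩⟩
  have : ComplementedLattice L := .of_isAtomistic
  exact IsModularLattice.card_isAtom_eq_card_isCoatom

/-- Greene, one direction: a finite geometric lattice (graded, atomic,
upper semimodular) which is modular has as many atoms as coatoms. -/
theorem card_atoms_eq_card_coatoms_of_modular {L : Type*} [Lattice L] [BoundedOrder L]
    [Fintype L] (r : L → ℕ)
    (hbot : r ⊥ = 0)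
    (hcov : ∀ x y : L, x ⋖ y → r y = r x + 1)
    (hatomic : ∀ x : L, ∃ S : Finset L, (∀ a ∈ S, IsAtom a) ∧ x = S.sup id)
    (hsemimod : ∀ x y : L, r (x ⊓ y) + r (x ⊔ y) ≤ r x + r y)
    (hmod : ∀ x y : L, r x + r y = r (x ⊓ y) + r (x ⊔ y)) :
    Nat.card {a : L // IsAtom a} = Nat.card {a : L // IsCoatom a} :=
  card_atoms_eq_card_coatoms_of_modular_general r hcov hatomic hmod
end

section
/- Let L be a finite geometric lattice in which the number of atoms equals the number of coatoms. Then L is modular. -/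
/-!
Argue by downward induction on `x`, comparing the covers of `x` with the coatoms above `x`.
If `p` covers `x` and `c ≥ x` is a coatom with `p ≰ c`, then `q ↦ p ⊔ q` injects the covers of
`x` below `c` into the covers of `p`, which by induction are at most as many as the coatoms above
`p`. A weighted double count over all such non-incident pairs `(p, c)` turns these local
inequalities into `#covers x ≤ #coatoms above x`, and in case of equality forces every one of
them to be an equality. Then each `[p, ⊤]` is modular and every cover of `p` has the form
`p ⊔ q` with `q ≤ c`; this gives `r y ≤ r (y ⊓ c) + 1` for every coatom `c`, hence
`r (y ⊓ b) ≤ r (y ⊓ a) + 1` whenever `a ⋖ b`, and modularity of `[x, ⊤]` follows along a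
maximal chain.
-/

open Finset

section Rank

variable {L : Type*} {r : L → ℕ}

theorem rank_strictMono [PartialOrder L] [Finite L] (hcov : ∀ x y : L, x ⋖ y → r y = r x + 1) :
    StrictMono r := by
  intro x y hxy
  induction x using WellFoundedGT.induction with
  | _ x ih =>
    obtain ⟨z, hxz, hzy⟩ := exists_covBy_le_of_lt hxy
    rw [← Nat.succ_le_iff, Nat.succ_eq_add_one, ← hcov x z hxz]
    rcases hzy.eq_or_lt with rfl | hzy
    · exact le_rfl
    · exact (ih z hxz.lt hzy).le

theorem covBy_of_rank_le_add_one [PartialOrder L] [Finite L]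
    (hcov : ∀ x y : L, x ⋖ y → r y = r x + 1) {x y : L} (hxy : x < y) (hr : r y ≤ r x + 1) :
    x ⋖ y :=
  ⟨hxy, fun z hxz hzy => by
    have := rank_strictMono hcov hxz
    have := rank_strictMono hcov hzy
    omega⟩

theorem isUpperModularLattice_of_rank [Lattice L] [Finite L]
    (hcov : ∀ x y : L, x ⋖ y → r y = r x + 1)
    (hsemimod : ∀ x y : L, r (x ⊓ y) + r (x ⊔ y) ≤ r x + r y) : IsUpperModularLattice L where
  covBy_sup_of_inf_covBy {a b} h := by
    refine covBy_of_rank_le_add_one hcov (right_lt_sup.2 fun hab => h.lt.ne (inf_eq_left.2 hab)) ?_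
    have := hcov _ _ h
    have := hsemimod a b
    omega

def LowerSemimodularOn [Lattice L] (r : L → ℕ) (s : Set L) : Prop :=
  ∀ y ∈ s, ∀ z ∈ s, r y + r z ≤ r (y ⊓ z) + r (y ⊔ z)

theorem lowerSemimodularOn_Ici_of_rank_inf_covBy [Lattice L] [Finite L]
    (hcov : ∀ x y : L, x ⋖ y → r y = r x + 1) {x : L}
    (h : ∀ y a b, x ≤ y → x ≤ a → a ⋖ b → r (y ⊓ b) ≤ r (y ⊓ a) + 1) :
    LowerSemimodularOn r (Set.Ici x) := by
  intro y hy z hz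
  suffices key : ∀ w, z ≤ w → w ≤ y ⊔ z → r y + r w ≤ r (y ⊓ w) + r (y ⊔ z) from
    key z le_rfl le_sup_right
  intro w
  induction w using WellFoundedGT.induction with
  | _ w ih =>
    intro hzw hw
    rcases hw.eq_or_lt with rfl | hlt
    · rw [inf_sup_self]
    obtain ⟨w', hww', hw'⟩ := exists_covBy_le_of_lt hlt
    have := ih w' hww'.lt (hzw.trans hww'.le) hw'
    have := h y w w' hy (le_trans hz hzw) hww'
    have := hcov w w' hww'
    omega

end Rank

theorem CovBy.inf_eq_of_not_le {L : Type*} [Lattice L] {x p c : L} (hxp : x ⋖ p) (hxc : x ≤ c)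
    (hpc : ¬p ≤ c) : p ⊓ c = x :=
  (hxp.wcovBy.eq_or_eq (le_inf hxp.le hxc) inf_le_left).resolve_right (inf_lt_left.2 hpc).ne

section UpperModular

variable {L : Type*} [Lattice L] [IsUpperModularLattice L]

theorem covBy_sup_of_covBy_of_covBy {x p q : L} (hp : x ⋖ p) (hq : x ⋖ q) (hpq : p ≠ q) :
    p ⋖ p ⊔ q :=
  covBy_sup_of_inf_covBy_right <| by rwa [WCovBy.inf_eq hp.wcovBy hq.wcovBy hpq]

theorem injOn_sup_covBy {x p c : L} (hxp : x ⋖ p) (hpc : ¬p ≤ c) :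
    Set.InjOn (p ⊔ ·) {q | x ⋖ q ∧ q ≤ c} := by
  rintro q ⟨hxq, hqc⟩ q' ⟨hxq', hq'c⟩ (he : p ⊔ q = p ⊔ q')
  by_contra hne
  have hqq' := covBy_sup_of_covBy_of_covBy hxq hxq' hne
  have hqp := covBy_sup_of_covBy_of_covBy hxq hxp fun h => hpc (h ▸ hqc)
  have hle : q ⊔ q' ≤ q ⊔ p := sup_le le_sup_left (by rw [sup_comm, he]; exact le_sup_right)
  rcases hqp.wcovBy.eq_or_eq hqq'.lt.le hle with h | h
  · exact hqq'.lt.ne' h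
  · exact hpc ((h ▸ le_sup_right : p ≤ q ⊔ q').trans (sup_le hqc hq'c))

theorem mapsTo_sup_covBy {x p c : L} (hxp : x ⋖ p) (hpc : ¬p ≤ c) :
    Set.MapsTo (p ⊔ ·) {q | x ⋖ q ∧ q ≤ c} {l | p ⋖ l} :=
  fun _ ⟨hxq, hqc⟩ => covBy_sup_of_covBy_of_covBy hxp hxq fun h => hpc (h ▸ hqc)

theorem covBy_sup_of_isAtom [OrderBot L] {x a : L} (ha : IsAtom a) (hax : ¬a ≤ x) :
    x ⋖ x ⊔ a :=
  covBy_sup_of_inf_covBy_right <| by rwa [ha.lt_iff.1 (inf_lt_right.2 hax), bot_covBy_iff]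

theorem le_of_forall_covBy_le [OrderBot L] [IsAtomistic L] {x y c : L} (hxy : x ≤ y)
    (hxc : x ≤ c) (h : ∀ q, x ⋖ q → q ≤ y → q ≤ c) : y ≤ c := by
  refine le_iff_atom_le_imp.2 fun a ha hay => ?_
  by_cases hax : a ≤ x
  · exact hax.trans hxc
  · exact le_sup_right.trans (h _ (covBy_sup_of_isAtom ha hax) (sup_le hxy hay))

theorem exists_covBy_le_not_le [OrderBot L] [IsAtomistic L] {x y c : L} (hxy : x ≤ y)
    (hxc : x ≤ c) (hyc : ¬y ≤ c) : ∃ q, x ⋖ q ∧ q ≤ y ∧ ¬q ≤ c := by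
  contrapose! hyc
  exact le_of_forall_covBy_le hxy hxc hyc

theorem CovBy.exists_isCoatom_not_le [BoundedOrder L] [IsAtomistic L] [Finite L] {x p : L}
    (hxp : x ⋖ p) : ∃ c, IsCoatom c ∧ x ≤ c ∧ ¬p ≤ c := by
  obtain ⟨c, hxc, hmax⟩ :=
    Finite.exists_le_maximal (p := fun c => x ≤ c ∧ ¬p ≤ c) ⟨le_rfl, hxp.lt.not_ge⟩
  have hccp : c ⋖ c ⊔ p :=
    covBy_sup_of_inf_covBy_right (by rwa [inf_comm, hxp.inf_eq_of_not_le hxc hmax.prop.2])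
  -- Every atom `a` outside `c` gives a cover `c ⊔ a` of `c`, which contains `p` by maximality.
  have htop : c ⊔ p = ⊤ := by
    refine eq_top_iff.2 (le_iff_atom_le_imp.2 fun a ha _ => ?_)
    by_cases hac : a ≤ c
    · exact le_sup_of_le_left hac
    have hca := covBy_sup_of_isAtom ha hac
    have hpa : p ≤ c ⊔ a := by
      by_contra hpa
      exact hca.lt.ne (hmax.eq_of_le ⟨hxc.trans le_sup_left, hpa⟩ le_sup_left)
    rcases hca.wcovBy.eq_or_eq le_sup_left (sup_le le_sup_left hpa) with h | h
    · exact absurd h hccp.lt.ne'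
    · exact h ▸ le_sup_right
  exact ⟨c, covBy_top_iff.1 (htop ▸ hccp), hxc, hmax.prop.2⟩

end UpperModular

section RankAboveCovers

variable {L : Type*} [Lattice L] [BoundedOrder L] [IsUpperModularLattice L] [IsAtomistic L]
  [Finite L] {r : L → ℕ}

theorem rank_le_rank_inf_add_one_of_isCoatom (hcov : ∀ x y : L, x ⋖ y → r y = r x + 1) {x : L}
    (hM : ∀ p, x ⋖ p → LowerSemimodularOn r (Set.Ici p))
    (hS : ∀ p c l, x ⋖ p → IsCoatom c → x ≤ c → ¬p ≤ c → p ⋖ l →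
      ∃ q, x ⋖ q ∧ q ≤ c ∧ p ⊔ q = l)
    {y c : L} (hxy : x ≤ y) (hc : IsCoatom c) (hxc : x ≤ c) : r y ≤ r (y ⊓ c) + 1 := by
  by_cases hyc : y ≤ c
  · rw [inf_eq_left.2 hyc]
    omega
  obtain ⟨p, hxp, hpy, hpc⟩ := exists_covBy_le_not_le hxy hxc hyc
  rcases hpy.eq_or_lt with rfl | hpy
  · rw [hxp.inf_eq_of_not_le hxc hpc, hcov x p hxp]
  -- A cover `p ⊔ q` of `p` below `y` yields a cover `q ≤ y ⊓ c` of `x`, above which ranks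
  -- are modular.
  obtain ⟨l, hpl, hly⟩ := exists_covBy_le_of_lt hpy
  obtain ⟨q, hxq, hqc, rfl⟩ := hS p c l hxp hc hxc hpc hpl
  have hmod := hM q hxq y (le_sup_right.trans hly) c hqc
  rw [hc.2 _ (right_lt_sup.2 hyc), hcov c ⊤ (covBy_top_iff.2 hc)] at hmod
  omega

theorem lowerSemimodularOn_Ici_of_forall_covBy (hcov : ∀ x y : L, x ⋖ y → r y = r x + 1)
    {x : L} (hM : ∀ p, x ⋖ p → LowerSemimodularOn r (Set.Ici p))
    (hS : ∀ p c l, x ⋖ p → IsCoatom c → x ≤ c → ¬p ≤ c → p ⋖ l →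
      ∃ q, x ⋖ q ∧ q ≤ c ∧ p ⊔ q = l) :
    LowerSemimodularOn r (Set.Ici x) := by
  refine lowerSemimodularOn_Ici_of_rank_inf_covBy hcov fun y a b hxy hxa hab => ?_
  obtain ⟨c, hc, hac, hbc⟩ := hab.exists_isCoatom_not_le
  have h := rank_le_rank_inf_add_one_of_isCoatom hcov hM hS (le_inf hxy (hxa.trans hab.le)) hc
    (hxa.trans hac)
  rwa [inf_assoc, hab.inf_eq_of_not_le hac hbc] at h

end RankAboveCovers

section DoubleCounting

variable {α β : Type*}

theorem sum_sum_inv_card_mul_card (s : Finset α) (u : α → Finset β) (hs : s.Nonempty)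
    (hu : ∀ a ∈ s, (u a).Nonempty) :
    ∑ a ∈ s, ∑ _b ∈ u a, ((#s * #(u a) : ℕ) : ℚ)⁻¹ = 1 := by
  have hinner : ∀ a ∈ s, ∑ _b ∈ u a, ((#s * #(u a) : ℕ) : ℚ)⁻¹ = (#s : ℚ)⁻¹ := by
    intro a ha
    have : (#(u a) : ℚ) ≠ 0 := by exact_mod_cast (hu a ha).card_pos.ne'
    rw [sum_const, nsmul_eq_mul, Nat.cast_mul, mul_inv, mul_left_comm, mul_inv_cancel₀ this,
      mul_one]
  rw [sum_congr rfl hinner, sum_const, nsmul_eq_mul,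
    mul_inv_cancel₀ (by exact_mod_cast hs.card_pos.ne')]

/-- Over the related pairs, both weights `(#s * #(above a))⁻¹` and `(#t * #(below b))⁻¹` sum
to `1`, so a termwise inequality between them is an equality. -/
theorem card_mul_card_bipartiteAbove_eq (R : α → β → Prop) [∀ a b, Decidable (R a b)]
    {s : Finset α} {t : Finset β} (hs : ∀ a ∈ s, (t.bipartiteAbove R a).Nonempty)
    (ht : ∀ b ∈ t, (s.bipartiteBelow R b).Nonempty)
    (hle : ∀ a ∈ s, ∀ b ∈ t, R a b →
      #s * #(t.bipartiteAbove R a) ≤ #t * #(s.bipartiteBelow R b))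
    {a : α} {b : β} (ha : a ∈ s) (hb : b ∈ t) (hab : R a b) :
    #s * #(t.bipartiteAbove R a) = #t * #(s.bipartiteBelow R b) := by
  set f : α → ℚ := fun a => ((#s * #(t.bipartiteAbove R a) : ℕ) : ℚ)⁻¹
  set g : β → ℚ := fun b => ((#t * #(s.bipartiteBelow R b) : ℕ) : ℚ)⁻¹
  have hgf : ∀ a ∈ s, ∀ b ∈ t.bipartiteAbove R a, g b ≤ f a := by
    intro a ha b hb
    obtain ⟨hb, hab⟩ := (mem_bipartiteAbove R).1 hb
    refine inv_anti₀ ?_ (by exact_mod_cast hle a ha b hb hab)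
    exact_mod_cast Nat.mul_pos (card_pos.2 ⟨a, ha⟩) (hs a ha).card_pos
  have hsum : ∑ a ∈ s, ∑ b ∈ t.bipartiteAbove R a, g b =
      ∑ a ∈ s, ∑ _b ∈ t.bipartiteAbove R a, f a := by
    rw [sum_sum_bipartiteAbove_eq_sum_sum_bipartiteBelow,
      sum_sum_inv_card_mul_card t _ ⟨b, hb⟩ ht, sum_sum_inv_card_mul_card s _ ⟨a, ha⟩ hs]
  have hinner := (sum_eq_sum_iff_of_le fun a ha => sum_le_sum (hgf a ha)).1 hsum a ha
  have hterm := (sum_eq_sum_iff_of_le (hgf a ha)).1 hinner b ((mem_bipartiteAbove R).2 ⟨hb, hab⟩)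
  exact_mod_cast (inv_inj.1 hterm).symm

end DoubleCounting

section Counting

variable {L : Type*} [Fintype L]

open scoped Classical in
noncomputable def upperCovers [Preorder L] (x : L) : Finset L := {q | x ⋖ q}

open scoped Classical in
noncomputable def coatomsAbove [Preorder L] [OrderTop L] (x : L) : Finset L :=
  {c | IsCoatom c ∧ x ≤ c}

@[simp]
theorem mem_upperCovers [Preorder L] {x q : L} : q ∈ upperCovers x ↔ x ⋖ q := by
  simp [upperCovers]

@[simp]
theorem mem_coatomsAbove [Preorder L] [OrderTop L] {x c : L} :
    c ∈ coatomsAbove x ↔ IsCoatom c ∧ x ≤ c := by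
  simp [coatomsAbove]

theorem card_upperCovers_bot [PartialOrder L] [OrderBot L] :
    #(upperCovers (⊥ : L)) = Nat.card {a : L // IsAtom a} := by
  classical
  rw [Nat.card_eq_fintype_card, Fintype.card_subtype]
  congr 1
  ext a
  simp [bot_covBy_iff]

theorem card_coatomsAbove_bot [Preorder L] [BoundedOrder L] :
    #(coatomsAbove (⊥ : L)) = Nat.card {c : L // IsCoatom c} := by
  classical
  rw [Nat.card_eq_fintype_card, Fintype.card_subtype]
  congr 1
  ext c
  simp

open scoped Classical

theorem coatomsAbove_eq_filter [Preorder L] [OrderTop L] {x p : L} (hxp : x ≤ p) :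
    coatomsAbove p = {c ∈ coatomsAbove x | p ≤ c} := by
  ext c
  simp only [mem_coatomsAbove, mem_filter]
  exact ⟨fun ⟨hc, hpc⟩ => ⟨⟨hc, hxp.trans hpc⟩, hpc⟩, fun ⟨⟨hc, _⟩, hpc⟩ => ⟨hc, hpc⟩⟩

variable [Lattice L] [IsUpperModularLattice L]

theorem card_filter_le_le_card_upperCovers {x p c : L} (hxp : x ⋖ p) (hpc : ¬p ≤ c) :
    #{q ∈ upperCovers x | q ≤ c} ≤ #(upperCovers p) :=
  card_le_card_of_injOn (p ⊔ ·)
    (fun q hq => by simpa using mapsTo_sup_covBy hxp hpc (by simpa using hq))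
    ((injOn_sup_covBy hxp hpc).mono fun q hq => by simpa using hq)

theorem exists_sup_eq_of_card_filter_le_eq {x p c l : L} (hxp : x ⋖ p) (hpc : ¬p ≤ c)
    (hcard : #{q ∈ upperCovers x | q ≤ c} = #(upperCovers p)) (hpl : p ⋖ l) :
    ∃ q, x ⋖ q ∧ q ≤ c ∧ p ⊔ q = l := by
  obtain ⟨q, hq, rfl⟩ := surjOn_of_injOn_of_card_le (p ⊔ ·)
    (fun q hq => by simpa using mapsTo_sup_covBy hxp hpc (by simpa using hq))
    ((injOn_sup_covBy hxp hpc).mono fun q hq => by simpa using hq) hcard.ge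
    (by simpa using hpl : l ∈ upperCovers p)
  simp only [coe_filter, mem_upperCovers, Set.mem_ofPred_eq] at hq
  exact ⟨q, hq.1, hq.2, rfl⟩

variable [BoundedOrder L]

theorem card_filter_le_le_card_filter_le {x p c : L}
    (hp : #(upperCovers p) ≤ #(coatomsAbove p)) (hxp : x ⋖ p) (hpc : ¬p ≤ c) :
    #{q ∈ upperCovers x | q ≤ c} ≤ #{c' ∈ coatomsAbove x | p ≤ c'} :=
  coatomsAbove_eq_filter hxp.le ▸ (card_filter_le_le_card_upperCovers hxp hpc).trans hp

variable [IsAtomistic L]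

theorem card_mul_card_filter_not_le_eq {x : L}
    (hle : ∀ p c, x ⋖ p → c ∈ coatomsAbove x → ¬p ≤ c →
      #(upperCovers x) * #{c' ∈ coatomsAbove x | ¬p ≤ c'} ≤
        #(coatomsAbove x) * #{q ∈ upperCovers x | ¬q ≤ c})
    {p c : L} (hxp : x ⋖ p) (hc : c ∈ coatomsAbove x) (hpc : ¬p ≤ c) :
    #(upperCovers x) * #{c' ∈ coatomsAbove x | ¬p ≤ c'} =
      #(coatomsAbove x) * #{q ∈ upperCovers x | ¬q ≤ c} := by
  refine card_mul_card_bipartiteAbove_eq (fun p c => ¬p ≤ c) (fun p hp => ?_) (fun c hc => ?_)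
    (fun p hp c hc => hle p c (mem_upperCovers.1 hp) hc) (mem_upperCovers.2 hxp) hc hpc
  · obtain ⟨c, hc, hxc, hpc⟩ := (mem_upperCovers.1 hp).exists_isCoatom_not_le
    exact ⟨c, (mem_bipartiteAbove _).2 ⟨mem_coatomsAbove.2 ⟨hc, hxc⟩, hpc⟩⟩
  · obtain ⟨hc, hxc⟩ := mem_coatomsAbove.1 hc
    obtain ⟨q, hxq, -, hqc⟩ := exists_covBy_le_not_le le_top hxc fun h => hc.1 (top_le_iff.1 h)
    exact ⟨q, (mem_bipartiteBelow _).2 ⟨mem_upperCovers.2 hxq, hqc⟩⟩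

theorem card_upperCovers_le_card_coatomsAbove (x : L) :
    #(upperCovers x) ≤ #(coatomsAbove x) := by
  induction x using WellFoundedGT.induction with
  | _ x ih =>
  by_contra! hlt
  by_cases hxt : x ⋖ ⊤
  · have htop : ∀ p ∈ upperCovers x, p = ⊤ := fun p hp =>
      (hxt.wcovBy.eq_or_eq (mem_upperCovers.1 hp).le le_top).resolve_left
        (mem_upperCovers.1 hp).lt.ne'
    have h1 : #(upperCovers x) ≤ 1 :=
      card_le_one.2 fun p hp q hq => (htop p hp).trans (htop q hq).symm
    have h2 : 0 < #(coatomsAbove x) := card_pos.2 ⟨x, by simp [covBy_top_iff.1 hxt]⟩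
    omega
  have hstrict : ∀ p c, x ⋖ p → c ∈ coatomsAbove x → ¬p ≤ c →
      #(upperCovers x) * #{c' ∈ coatomsAbove x | ¬p ≤ c'} <
        #(coatomsAbove x) * #{q ∈ upperCovers x | ¬q ≤ c} := by
    intro p c hxp hc hpc
    have hpt : p ≠ ⊤ := fun h => hxt (h ▸ hxp)
    obtain ⟨c', hc', hpc'⟩ := (eq_top_or_exists_le_coatom p).resolve_left hpt
    have hdC : 0 < #{c' ∈ coatomsAbove x | p ≤ c'} :=
      card_pos.2 ⟨c', mem_filter.2 ⟨mem_coatomsAbove.2 ⟨hc', hxp.le.trans hpc'⟩, hpc'⟩⟩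
    have hdA := card_filter_le_le_card_filter_le (ih p hxp.lt) hxp hpc
    have hA := card_filter_add_card_filter_not (s := upperCovers x) (· ≤ c)
    have hC := card_filter_add_card_filter_not (s := coatomsAbove x) (p ≤ ·)
    -- With `#U = a + j` and `#C = d + k` (`hA`, `hC`), the goal `#U * k < #C * j` reduces to
    -- `a * k < d * j`, which follows from `a ≤ d`, `0 < d` and `k < j` (as `#C < #U`).
    nlinarith
  obtain ⟨p, hp⟩ := card_pos.1 (Nat.zero_lt_of_lt hlt)
  obtain ⟨c, hc, hxc, hpc⟩ := (mem_upperCovers.1 hp).exists_isCoatom_not_le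
  have hc' : c ∈ coatomsAbove x := mem_coatomsAbove.2 ⟨hc, hxc⟩
  exact (hstrict p c (mem_upperCovers.1 hp) hc' hpc).ne
    (card_mul_card_filter_not_le_eq (fun p c hxp hc hpc => (hstrict p c hxp hc hpc).le)
      (mem_upperCovers.1 hp) hc' hpc)

theorem card_filter_le_eq_card_upperCovers_of_card_eq {x : L}
    (hx : #(upperCovers x) = #(coatomsAbove x)) {p c : L} (hxp : x ⋖ p)
    (hc : c ∈ coatomsAbove x) (hpc : ¬p ≤ c) :
    #{q ∈ upperCovers x | q ≤ c} = #(upperCovers p) ∧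
      #(upperCovers p) = #(coatomsAbove p) := by
  have hle : ∀ p' c', x ⋖ p' → c' ∈ coatomsAbove x → ¬p' ≤ c' →
      #(upperCovers x) * #{c'' ∈ coatomsAbove x | ¬p' ≤ c''} ≤
        #(coatomsAbove x) * #{q ∈ upperCovers x | ¬q ≤ c'} := by
    intro p' c' hxp' _ hpc'
    have hdA := card_filter_le_le_card_filter_le
      (card_upperCovers_le_card_coatomsAbove p') hxp' hpc'
    have hA := card_filter_add_card_filter_not (s := upperCovers x) (· ≤ c')
    have hC := card_filter_add_card_filter_not (s := coatomsAbove x) (p' ≤ ·)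
    rw [hx]
    exact Nat.mul_le_mul_left _ (by omega)
  have heq := card_mul_card_filter_not_le_eq hle hxp hc hpc
  rw [hx] at heq
  have hA := card_filter_add_card_filter_not (s := upperCovers x) (· ≤ c)
  have hC := card_filter_add_card_filter_not (s := coatomsAbove x) (p ≤ ·)
  have hkj := Nat.eq_of_mul_eq_mul_left (card_pos.2 ⟨c, hc⟩) heq
  have hdA := card_filter_le_le_card_upperCovers hxp hpc
  have hp := card_upperCovers_le_card_coatomsAbove p
  rw [coatomsAbove_eq_filter hxp.le] at hp ⊢
  omega

theorem lowerSemimodularOn_Ici_of_card_eq {r : L → ℕ} (hcov : ∀ x y : L, x ⋖ y → r y = r x + 1)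
    (x : L) (hx : #(upperCovers x) = #(coatomsAbove x)) : LowerSemimodularOn r (Set.Ici x) := by
  induction x using WellFoundedGT.induction with
  | _ x ih =>
  refine lowerSemimodularOn_Ici_of_forall_covBy hcov (fun p hxp => ?_)
    (fun p c l hxp hc hxc hpc hpl => ?_)
  · obtain ⟨c, hc, hxc, hpc⟩ := hxp.exists_isCoatom_not_le
    exact ih p hxp.lt
      (card_filter_le_eq_card_upperCovers_of_card_eq hx hxp (mem_coatomsAbove.2 ⟨hc, hxc⟩) hpc).2
  · exact exists_sup_eq_of_card_filter_le_eq hxp hpc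
      (card_filter_le_eq_card_upperCovers_of_card_eq hx hxp (mem_coatomsAbove.2 ⟨hc, hxc⟩) hpc).1
      hpl

end Counting

theorem modular_of_card_atoms_eq_card_coatoms_general {L : Type*} [Lattice L] [BoundedOrder L]
    [Fintype L] (r : L → ℕ)
    (hcov : ∀ x y : L, x ⋖ y → r y = r x + 1)
    (hatomic : ∀ x : L, ∃ S : Finset L, (∀ a ∈ S, IsAtom a) ∧ x = S.sup id)
    (hsemimod : ∀ x y : L, r (x ⊓ y) + r (x ⊔ y) ≤ r x + r y)
    (hcard : Nat.card {a : L // IsAtom a} = Nat.card {a : L // IsCoatom a}) :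
    ∀ x y : L, r x + r y = r (x ⊓ y) + r (x ⊔ y) := by
  have := isUpperModularLattice_of_rank hcov hsemimod
  have : IsAtomistic L := ⟨fun x => by
    obtain ⟨S, hS, rfl⟩ := hatomic x
    exact ⟨S, isLUB_sup_id, hS⟩⟩
  have hmod := lowerSemimodularOn_Ici_of_card_eq hcov ⊥
    (by rw [card_upperCovers_bot, card_coatomsAbove_bot, hcard])
  intro x y
  have := hmod x bot_le y bot_le
  have := hsemimod x y
  omega

/-- Greene, converse direction: a finite geometric lattice (graded,
atomic, upper semimodular) with as many atoms as coatoms is modular. -/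
theorem modular_of_card_atoms_eq_card_coatoms {L : Type*} [Lattice L] [BoundedOrder L]
    [Fintype L] (r : L → ℕ)
    (hbot : r ⊥ = 0)
    (hcov : ∀ x y : L, x ⋖ y → r y = r x + 1)
    (hatomic : ∀ x : L, ∃ S : Finset L, (∀ a ∈ S, IsAtom a) ∧ x = S.sup id)
    (hsemimod : ∀ x y : L, r (x ⊓ y) + r (x ⊔ y) ≤ r x + r y)
    (hcard : Nat.card {a : L // IsAtom a} = Nat.card {a : L // IsCoatom a}) :
    ∀ x y : L, r x + r y = r (x ⊓ y) + r (x ⊔ y) :=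
  modular_of_card_atoms_eq_card_coatoms_general r hcov hatomic hsemimod hcard
end

section
/- Let M = (E, F) be a matroid with basis set B, and let Φ_M = Σ_{B∈B} Π_{b∈B} x_b ∈ k[x_e : e ∈ E], where char k = 0. Then the annihilator ideal Ann Φ_M in Q = k[∂/∂x_e : e ∈ E] contains: (a) x_e² for every e ∈ E, (b) the monomial x_S = Π_{e∈S} x_e for every dependent set S, and (c) the binomial x_A − x_{A'} for all independent sets A, A' with σ(A) = σ(A'). -/
open MvPolynomial

/-- The differential operator `∂^m = ∏ e (∂/∂x_e)^{m e}` applied to `F`. -/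
noncomputable def diffMon {k : Type*} [CommSemiring k] {E : Type*} [Fintype E]
    (m : E →₀ ℕ) (F : MvPolynomial E k) : MvPolynomial E k :=
  Finset.univ.toList.foldl (fun G e => (fun H => pderiv e H)^[m e] G) F

/-- The action of `φ ∈ Q = k[∂/∂x_e : e ∈ E]` on a polynomial `F ∈ k[x_e : e ∈ E]`. -/
noncomputable def diffAct {k : Type*} [CommSemiring k] {E : Type*} [Fintype E]
    (φ F : MvPolynomial E k) : MvPolynomial E k :=
  ∑ m ∈ φ.support, φ.coeff m • diffMon m F

/-- The basis generating polynomial `Φ_M = Σ_{B a basis} Π_{b ∈ B} x_b` of a matroid. -/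
noncomputable def basisGenPoly {k : Type*} [CommSemiring k] {E : Type*} [Fintype E]
    (M : Matroid E) : MvPolynomial E k :=
  ∑ B : Finset E,
    haveI := Classical.propDecidable (M.IsBase (B : Set E))
    if M.IsBase (B : Set E) then ∏ e ∈ B, X e else 0

/-! On monomials `∂^m x^s = (∏ₑ (s e).descFactorial (m e)) • x^(s - m)`, so on a square-free
monomial `x_B` the operator `∂^m` vanishes as soon as some `m e ≥ 2`, while `∂^A x_B` is `x_{B \ A}`
if `A ⊆ B` and `0` otherwise. Hence `∂^A Φ_M` is the sum of the `x_U` over the sets `U` disjoint from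
`A` with `U ∪ A` a basis; for independent `A` these `U` are the bases of the contraction `M ／ A`.
No such `U` exists when `A` is dependent, and for independent `A` they depend only on `σ(A)`, as
`M ／ σ(A)` is `M ／ A` with its loops deleted. -/

namespace Matroid

variable {α : Type*}

lemma contract_closure_isBase_iff (M : Matroid α) (C B : Set α) :
    (M ／ M.closure C).IsBase B ↔ (M ／ C).IsBase B := by
  rw [contract_closure_eq_contract_delete, ← contract_loops_eq, delete_loops_eq_removeLoops,
    removeLoops_isBase_eq]

lemma contract_isBase_iff_of_closure_eq {M : Matroid α} {C C' : Set α}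
    (h : M.closure C = M.closure C') (B : Set α) : (M ／ C).IsBase B ↔ (M ／ C').IsBase B := by
  rw [← contract_closure_isBase_iff, h, contract_closure_isBase_iff]

end Matroid

lemma Nat.descFactorial_of_le_one {n : ℕ} (hn : n ≤ 1) (j : ℕ) :
    n.descFactorial j = if j ≤ n then 1 else 0 := by
  split_ifs with hj
  · interval_cases n <;> interval_cases j <;> rfl
  · exact Nat.descFactorial_eq_zero_iff_lt.mpr (not_le.mp hj)

lemma List.foldl_linearMap_apply {R M ι : Type*} [Semiring R] [AddCommMonoid M] [Module R M]
    (f : ι → M →ₗ[R] M) (l : List ι) (g : M →ₗ[R] M) (x : M) :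
    l.foldl (fun y i => f i y) (g x) = l.foldl (fun h i => f i ∘ₗ h) g x := by
  induction l generalizing g with
  | nil => rfl
  | cons i l ih => exact ih (f i ∘ₗ g)

section DiffMon

variable {k : Type*} [CommSemiring k] {E : Type*}

lemma iterate_pderiv_monomial (i : E) (n : ℕ) (s : E →₀ ℕ) (a : k) :
    (pderiv i)^[n] (monomial s a) =
      monomial (s - Finsupp.single i n) (a * (s i).descFactorial n) := by
  induction n with
  | zero => simp
  | succ n ih =>
    rw [Function.iterate_succ_apply', ih, pderiv_monomial, tsub_tsub, ← Finsupp.single_add,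
      Nat.descFactorial_succ, Nat.cast_mul, Finsupp.tsub_apply, Finsupp.single_eq_same]
    congr 1
    ring

lemma foldl_iterate_pderiv_monomial [DecidableEq E] (m : E →₀ ℕ) {l : List E} (hl : l.Nodup)
    (s : E →₀ ℕ) (a : k) :
    l.foldl (fun G e => (pderiv e)^[m e] G) (monomial s a) =
      monomial (s - ∑ e ∈ l.toFinset, Finsupp.single e (m e))
        (a * ∏ e ∈ l.toFinset, ((s e).descFactorial (m e) : k)) := by
  induction l generalizing s a with
  | nil => simp
  | cons e l ih =>
    obtain ⟨hel, hl⟩ := List.nodup_cons.mp hl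
    have hel' : e ∉ l.toFinset := List.mem_toFinset.not.mpr hel
    have hs : ∀ x ∈ l.toFinset, (s - Finsupp.single e (m e)) x = s x := fun x hx => by
      rw [Finsupp.tsub_apply, Finsupp.single_eq_of_ne (by rintro rfl; exact hel' hx), tsub_zero]
    rw [List.foldl_cons, iterate_pderiv_monomial, ih hl, List.toFinset_cons,
      Finset.sum_insert hel', Finset.prod_insert hel', tsub_tsub,
      Finset.prod_congr rfl fun x hx => by rw [hs x hx], mul_assoc]

variable [Fintype E]

lemma diffMon_monomial (m s : E →₀ ℕ) (a : k) :
    diffMon m (monomial s a) = monomial (s - m) (a * ∏ e, ((s e).descFactorial (m e) : k)) := by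
  classical
  rw [diffMon, foldl_iterate_pderiv_monomial m (Finset.nodup_toList _), Finset.toList_toFinset,
    Finsupp.univ_sum_single]

lemma diffMon_eq_foldl_linearMap (m : E →₀ ℕ) (F : MvPolynomial E k) :
    diffMon m F = Finset.univ.toList.foldl
      (fun h e => ((pderiv (R := k) e).toLinearMap ^ m e) ∘ₗ h) LinearMap.id F := by
  rw [diffMon, ← List.foldl_linearMap_apply]
  simp only [Module.End.pow_apply]
  rfl

lemma diffMon_sum {ι : Type*} (m : E →₀ ℕ) (s : Finset ι) (F : ι → MvPolynomial E k) :
    diffMon m (∑ i ∈ s, F i) = ∑ i ∈ s, diffMon m (F i) := by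
  simp only [diffMon_eq_foldl_linearMap, map_sum]

end DiffMon

section SquareFree

variable {k : Type*} [CommSemiring k] {E : Type*}

lemma prod_X_eq_monomial (B : Finset E) :
    (∏ b ∈ B, X b : MvPolynomial E k) = monomial (∑ b ∈ B, Finsupp.single b 1) 1 :=
  (monomial_sum_one B _).symm

variable [DecidableEq E]

lemma sum_single_one_apply (B : Finset E) (x : E) :
    (∑ b ∈ B, Finsupp.single b 1 : E →₀ ℕ) x = if x ∈ B then 1 else 0 := by
  simp [Finsupp.finsetSum_apply, Finsupp.single_apply]

lemma sum_single_one_le_iff (A B : Finset E) :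
    (∑ a ∈ A, Finsupp.single a 1 : E →₀ ℕ) ≤ ∑ b ∈ B, Finsupp.single b 1 ↔ A ⊆ B := by
  simp only [Finsupp.le_def, sum_single_one_apply]
  refine ⟨fun h x hx => ?_, fun h x => ?_⟩
  · by_contra hxB
    simpa [hx, hxB] using h x
  · by_cases hx : x ∈ A
    · simp [hx, h hx]
    · simp [hx]

variable [Fintype E]

lemma diffMon_prod_X (m : E →₀ ℕ) (B : Finset E) :
    diffMon m (∏ b ∈ B, X b : MvPolynomial E k) =
      if m ≤ ∑ b ∈ B, Finsupp.single b 1 then monomial ((∑ b ∈ B, Finsupp.single b 1) - m) 1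
      else 0 := by
  have hle : ∀ e, (∑ b ∈ B, Finsupp.single b 1 : E →₀ ℕ) e ≤ 1 := fun e => by
    rw [sum_single_one_apply]; split_ifs <;> simp
  simp only [prod_X_eq_monomial, diffMon_monomial, one_mul, ← Nat.cast_prod,
    Nat.descFactorial_of_le_one (hle _), Fintype.prod_boole, Finsupp.le_def]
  split_ifs <;> simp

lemma diffMon_sum_single_one_prod_X (A B : Finset E) :
    diffMon (∑ a ∈ A, Finsupp.single a 1) (∏ b ∈ B, X b : MvPolynomial E k) =
      if A ⊆ B then ∏ b ∈ B \ A, X b else 0 := by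
  rw [diffMon_prod_X]
  by_cases hAB : A ⊆ B
  · rw [if_pos ((sum_single_one_le_iff A B).mpr hAB), if_pos hAB, prod_X_eq_monomial,
      ← Finset.sum_sdiff hAB, add_tsub_cancel_right]
  · rw [if_neg (mt (sum_single_one_le_iff A B).mp hAB), if_neg hAB]

end SquareFree

section DiffAct

variable {k : Type*} {E : Type*} [Fintype E]

lemma diffAct_monomial_one [CommSemiring k] [Nontrivial k] (m : E →₀ ℕ)
    (F : MvPolynomial E k) : diffAct (monomial m 1) F = diffMon m F := by
  classical
  rw [diffAct, support_monomial, if_neg one_ne_zero, Finset.sum_singleton, coeff_monomial,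
    if_pos rfl, one_smul]

lemma diffAct_sub [CommRing k] (φ ψ F : MvPolynomial E k) :
    diffAct (φ - ψ) F = diffAct φ F - diffAct ψ F := by
  simp only [diffAct, ← sum_def (b := fun m c => c • diffMon m F)]
  exact Finsupp.sum_sub_index fun _ _ _ => sub_smul _ _ _

end DiffAct

section BasisGenPoly

variable {k : Type*} [CommSemiring k] {E : Type*} [Fintype E]

open Classical in
lemma basisGenPoly_eq_sum_filter (M : Matroid E) :
    basisGenPoly (k := k) M =
      ∑ B ∈ Finset.univ.filter (fun B : Finset E => M.IsBase B), ∏ b ∈ B, X b :=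
  (Finset.sum_filter _ _).symm

lemma diffMon_basisGenPoly_of_one_lt (M : Matroid E) {m : E →₀ ℕ} {e : E} (he : 1 < m e) :
    diffMon m (basisGenPoly (k := k) M) = 0 := by
  classical
  rw [basisGenPoly_eq_sum_filter, diffMon_sum]
  refine Finset.sum_eq_zero fun B _ => ?_
  rw [diffMon_prod_X, if_neg fun h => ?_]
  have := (Finsupp.le_def.mp h e).trans_lt' he
  rw [sum_single_one_apply] at this
  split_ifs at this <;> omega

open Classical in
lemma diffMon_sum_single_one_basisGenPoly [DecidableEq E] (M : Matroid E) (A : Finset E) :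
    diffMon (∑ a ∈ A, Finsupp.single a 1) (basisGenPoly (k := k) M) =
      ∑ U ∈ Finset.univ.filter
        (fun U : Finset E => M.IsBase (↑U ∪ ↑A) ∧ Disjoint (U : Set E) ↑A), ∏ u ∈ U, X u := by
  rw [basisGenPoly_eq_sum_filter, diffMon_sum]
  simp only [diffMon_sum_single_one_prod_X, ← Finset.sum_filter, Finset.filter_filter]
  refine Finset.sum_nbij' (· \ A) (· ∪ A) ?_ ?_ ?_ ?_ fun _ _ => rfl <;>
    simp only [Finset.mem_filter_univ]
  · rintro B ⟨hB, hAB⟩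
    exact ⟨by rwa [← Finset.coe_union, Finset.sdiff_union_of_subset hAB],
      Finset.disjoint_coe.mpr Finset.sdiff_disjoint⟩
  · rintro U ⟨hU, -⟩
    exact ⟨by rwa [Finset.coe_union], Finset.subset_union_right⟩
  · rintro B ⟨-, hAB⟩
    exact Finset.sdiff_union_of_subset hAB
  · rintro U ⟨-, hUA⟩
    exact Finset.union_sdiff_cancel_right (Finset.disjoint_coe.mp hUA)

open Classical in
lemma diffAct_prod_X_basisGenPoly [Nontrivial k] (M : Matroid E) (A : Finset E) :
    diffAct (∏ a ∈ A, X a) (basisGenPoly (k := k) M) =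
      ∑ U ∈ Finset.univ.filter
        (fun U : Finset E => M.IsBase (↑U ∪ ↑A) ∧ Disjoint (U : Set E) ↑A), ∏ u ∈ U, X u := by
  rw [prod_X_eq_monomial, diffAct_monomial_one, diffMon_sum_single_one_basisGenPoly]

end BasisGenPoly

theorem ann_basisGenPoly_contains_general {k : Type*} [Field k] {E : Type*}
    [Fintype E] (M : Matroid E) :
    (∀ e : E, diffAct (X e ^ 2) (basisGenPoly (k := k) M) = 0) ∧
      (∀ S : Finset E, ¬ M.Indep (S : Set E) →
        diffAct (∏ e ∈ S, X e) (basisGenPoly (k := k) M) = 0) ∧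
      (∀ A A' : Finset E, M.Indep (A : Set E) → M.Indep (A' : Set E) →
        M.closure (A : Set E) = M.closure (A' : Set E) →
        diffAct ((∏ e ∈ A, X e) - ∏ e ∈ A', X e) (basisGenPoly (k := k) M) = 0) := by
  classical
  refine ⟨fun e => ?_, fun S hS => ?_, fun A A' hA hA' hσ => ?_⟩
  · rw [X_pow_eq_monomial, diffAct_monomial_one]
    exact diffMon_basisGenPoly_of_one_lt M (e := e) (by simp)
  · rw [diffAct_prod_X_basisGenPoly]
    refine Finset.sum_eq_zero fun U hU => absurd ?_ hS
    exact (Finset.mem_filter.mp hU).2.1.indep.subset Set.subset_union_right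
  · rw [diffAct_sub, sub_eq_zero, diffAct_prod_X_basisGenPoly, diffAct_prod_X_basisGenPoly]
    refine Finset.sum_congr (Finset.filter_congr fun U _ => ?_) fun _ _ => rfl
    rw [← hA.contract_isBase_iff, ← hA'.contract_isBase_iff]
    exact Matroid.contract_isBase_iff_of_closure_eq hσ _

/-- `Ann Φ_M` contains (a) `x_e²` for every `e`, (b) `x_S` for every
dependent set `S`, and (c) `x_A − x_{A'}` for all independent `A, A'` with
`σ(A) = σ(A')`. -/
theorem ann_basisGenPoly_contains {k : Type*} [Field k] [CharZero k] {E : Type*}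
    [Fintype E] (M : Matroid E) (hE : M.E = Set.univ) :
    (∀ e : E, diffAct (X e ^ 2) (basisGenPoly (k := k) M) = 0) ∧
      (∀ S : Finset E, ¬ M.Indep (S : Set E) →
        diffAct (∏ e ∈ S, X e) (basisGenPoly (k := k) M) = 0) ∧
      (∀ A A' : Finset E, M.Indep (A : Set E) → M.Indep (A' : Set E) →
        M.closure (A : Set E) = M.closure (A' : Set E) →
        diffAct ((∏ e ∈ A, X e) - ∏ e ∈ A', X e) (basisGenPoly (k := k) M) = 0) :=
  ann_basisGenPoly_contains_general M
end

section
/- Let M be a matroid, Ω the set of flats, and for each flat τ of M let f_τ = Σ x_F, the sum of square-free monomials x_F over all independent sets F with σ(F) = τ. Then the ideal J_M generated by Λ_M = {x_e²} ∪ {x_S : S dependent} ∪ {x_A − x_{A'} : A, A' independent, σ(A) = σ(A')} in the differential-operator ring Q equals the intersection ∩_{τ∈Ω} Ann f_τ. -/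
/-!
Let `Q` act on `k[x]` by `x_e ↦ ∂/∂x_e`. Then `x_A · f_τ = ∑ x_G` over the `G` disjoint from `A`
with `G ∪ A` independent and `σ(G ∪ A) = τ`. This kills `x_e²` and `x_S` for dependent `S`, and,
since `G ∪ A` is independent iff `G` is independent in `M ／ σ(A)` (for `G` disjoint from `σ(A)`),
the condition only depends on `σ(A)`, so `x_A − x_{A'}` acts as zero too: `J_M ⊆ ⋂ Ann f_τ`.

Conversely, the constant term of `x_S · f_τ` for independent `S` is `[σ(S) = τ]`. Fix an independent
`R(τ)` spanning each flat `τ`. Modulo `J_M` a monomial is either `0` or some `x_S` with `S`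
independent, and then `x_S ≡ x_{R(σ S)}`; hence every `φ` is congruent to
`∑_τ (φ · f_τ)(0) x_{R(τ)}`, which is `0` when `φ` annihilates every `f_τ`.
-/

open MvPolynomial

/-- The generating set
`Λ_M = {x_e²} ∪ {x_S : S dependent} ∪ {x_A − x_{A'} : A, A' independent, σA = σA'}`. -/
def matroidLambda (k : Type*) [CommRing k] {E : Type*} [Fintype E] (M : Matroid E) :
    Set (MvPolynomial E k) :=
  {φ | ∃ e : E, φ = X e ^ 2} ∪
    {φ | ∃ S : Finset E, ¬ M.Indep (S : Set E) ∧ φ = ∏ e ∈ S, X e} ∪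
    {φ | ∃ A A' : Finset E, M.Indep (A : Set E) ∧ M.Indep (A' : Set E) ∧
      M.closure (A : Set E) = M.closure (A' : Set E) ∧
      φ = (∏ e ∈ A, X e) - ∏ e ∈ A', X e}

/-- For a flat `τ`, the polynomial `f_τ = Σ x_F` over independent `F` with `σ(F) = τ`. -/
noncomputable def flatPoly (k : Type*) [CommRing k] {E : Type*} [Fintype E]
    (M : Matroid E) (τ : Set E) : MvPolynomial E k :=
  ∑ F : Finset E,
    haveI := Classical.propDecidable (M.Indep (F : Set E) ∧ M.closure (F : Set E) = τ)
    if M.Indep (F : Set E) ∧ M.closure (F : Set E) = τ then ∏ e ∈ F, X e else 0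

section DifferentialAction

variable {k : Type*} [CommSemiring k] {E : Type*}

theorem pderiv_pderiv_comm (i j : E) (p : MvPolynomial E k) :
    pderiv i (pderiv j p) = pderiv j (pderiv i p) := by
  induction p using MvPolynomial.induction_on' with
  | add p q hp hq => simp only [map_add, hp, hq]
  | monomial s a =>
    rcases eq_or_ne i j with rfl | hij
    · rfl
    simp only [pderiv_monomial, Finsupp.tsub_apply, Finsupp.single_eq_of_ne hij,
      Finsupp.single_eq_of_ne hij.symm, tsub_zero, tsub_tsub, add_comm (Finsupp.single j 1)]
    rw [mul_right_comm]

theorem commute_pderiv (i j : E) :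
    Commute ((pderiv i).toLinearMap : Module.End k (MvPolynomial E k)) (pderiv j).toLinearMap :=
  LinearMap.ext (pderiv_pderiv_comm i j)

theorem pairwise_commute_pderiv_pow (s : Set E) (m : E → ℕ) :
    s.Pairwise (Function.onFun Commute
      fun e => ((pderiv e).toLinearMap : Module.End k (MvPolynomial E k)) ^ m e) :=
  fun i _ j _ _ => (commute_pderiv i j).pow_pow _ _

variable [Fintype E]

noncomputable def pderivMon (m : E →₀ ℕ) : Module.End k (MvPolynomial E k) :=
  Finset.univ.noncommProd
    (fun e => ((pderiv e).toLinearMap : Module.End k (MvPolynomial E k)) ^ m e)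
    (pairwise_commute_pderiv_pow _ m)

theorem diffMon_eq_pderivMon (m : E →₀ ℕ) (F : MvPolynomial E k) :
    diffMon m F = pderivMon m F := by
  have foldl_eq : ∀ (l : List E) (F : MvPolynomial E k),
      l.foldl (fun G e => (fun H => pderiv e H)^[m e] G) F =
        (l.map fun e => ((pderiv e).toLinearMap : Module.End k (MvPolynomial E k)) ^ m e
          ).reverse.prod F := by
    intro l
    induction l with
    | nil => intro F; rfl
    | cons a l ih =>
      intro F
      rw [List.foldl_cons, ih, List.map_cons, List.reverse_cons, List.prod_append,
        List.prod_singleton, Module.End.mul_apply, Module.End.pow_apply]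
      rfl
  classical
  rw [diffMon, foldl_eq, pderivMon, ← List.map_reverse, ← Finset.noncommProd_toFinset _ _
    (pairwise_commute_pderiv_pow _ m) (List.nodup_reverse.2 (Finset.nodup_toList _))]
  simp only [List.toFinset_reverse, Finset.toList_toFinset]

theorem pderivMon_zero : pderivMon (0 : E →₀ ℕ) = (1 : Module.End k (MvPolynomial E k)) :=
  (Finset.noncommProd_eq_pow_card _ _ _ 1 fun _ _ => pow_zero _).trans (one_pow _)

theorem pderivMon_add (m n : E →₀ ℕ) :
    pderivMon (m + n) = (pderivMon m * pderivMon n : Module.End k (MvPolynomial E k)) := by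
  simp only [pderivMon, Finsupp.coe_add, Pi.add_apply, pow_add]
  exact Finset.noncommProd_mul_distrib _ _
    (pairwise_commute_pderiv_pow _ m) (pairwise_commute_pderiv_pow _ n)
    fun i _ j _ _ => (commute_pderiv i j).pow_pow _ _

theorem pderivMon_single (e : E) (n : ℕ) :
    pderivMon (Finsupp.single e n) =
      ((pderiv e).toLinearMap : Module.End k (MvPolynomial E k)) ^ n := by
  classical
  refine (Finset.noncommProd_erase_mul _ (Finset.mem_univ e) _ _).symm.trans ?_
  rw [Finsupp.single_eq_same]
  refine (congrArg (· * _) ((Finset.noncommProd_eq_pow_card _ _ _ 1 fun i hi => ?_).trans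
    (one_pow _))).trans (one_mul _)
  rw [Finsupp.single_eq_of_ne (Finset.ne_of_mem_erase hi), pow_zero]

noncomputable def pderivMonHom : Multiplicative (E →₀ ℕ) →* Module.End k (MvPolynomial E k) where
  toFun m := pderivMon m.toAdd
  map_one' := pderivMon_zero
  map_mul' m n := pderivMon_add m.toAdd n.toAdd

variable (k E) in
/-- `Q` is modelled by the same polynomial ring, its variable `x_e` acting as `∂/∂x_e`. -/
noncomputable def diffAlgHom : MvPolynomial E k →ₐ[k] Module.End k (MvPolynomial E k) :=
  AddMonoidAlgebra.lift k (Module.End k (MvPolynomial E k)) (E →₀ ℕ) pderivMonHom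

theorem diffAct_eq_diffAlgHom (φ F : MvPolynomial E k) : diffAct φ F = diffAlgHom k E φ F := by
  rw [diffAlgHom, AddMonoidAlgebra.lift_apply, Finsupp.sum, LinearMap.sum_apply]
  exact Finset.sum_congr rfl fun m _ => by
    rw [LinearMap.smul_apply, diffMon_eq_pderivMon]; rfl

theorem diffAlgHom_monomial (m : E →₀ ℕ) (c : k) :
    diffAlgHom k E (monomial m c) = c • pderivMon m :=
  AddMonoidAlgebra.lift_single _ m c

theorem diffAlgHom_X (e : E) : diffAlgHom k E (X e) = (pderiv e).toLinearMap := by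
  rw [X, diffAlgHom_monomial, one_smul, pderivMon_single, pow_one]

variable (k E) in
def diffAnnihilator (F : MvPolynomial E k) : Ideal (MvPolynomial E k) where
  carrier := {φ | diffAlgHom k E φ F = 0}
  add_mem' ha hb := by simp_all
  zero_mem' := by simp
  smul_mem' c φ h := by simp_all

theorem mem_diffAnnihilator (φ F : MvPolynomial E k) :
    φ ∈ diffAnnihilator k E F ↔ diffAlgHom k E φ F = 0 :=
  Iff.rfl

end DifferentialAction

section SquarefreeMonomials

variable {k : Type*} [CommSemiring k] {E : Type*} [DecidableEq E]

theorem pderiv_prod_X (e : E) (B : Finset E) :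
    pderiv e (∏ b ∈ B, X b : MvPolynomial E k) =
      if e ∈ B then ∏ b ∈ B.erase e, X b else 0 := by
  induction B using Finset.induction_on with
  | empty => simp
  | insert a B ha ih =>
    rw [Finset.prod_insert ha, Derivation.leibniz, ih]
    rcases eq_or_ne a e with rfl | hae
    · simp [ha]
    · by_cases heB : e ∈ B
      · rw [if_pos heB, if_pos (Finset.mem_insert_of_mem heB), Finset.erase_insert_of_ne hae,
          Finset.prod_insert (fun h => ha (Finset.mem_of_mem_erase h)), pderiv_X_of_ne hae]
        simp
      · simp [heB, hae.symm, pderiv_X_of_ne hae]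

variable [Fintype E]

theorem diffAlgHom_prod_X_apply_prod_X (A B : Finset E) :
    diffAlgHom k E (∏ a ∈ A, X a) (∏ b ∈ B, X b) =
      if A ⊆ B then ∏ b ∈ B \ A, X b else 0 := by
  induction A using Finset.induction_on with
  | empty => simp
  | insert a A ha ih =>
    rw [Finset.prod_insert ha, map_mul, Module.End.mul_apply, ih, diffAlgHom_X]
    by_cases hAB : A ⊆ B
    · rw [if_pos hAB, Derivation.coeFn_coe, pderiv_prod_X, Finset.sdiff_insert]
      by_cases haB : a ∈ B <;> simp [haB, hAB, ha, Finset.insert_subset_iff]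
    · rw [if_neg hAB, if_neg fun h => hAB ((Finset.subset_insert a A).trans h), map_zero]

end SquarefreeMonomials

namespace Matroid

variable {α : Type*} {M : Matroid α} {A A' G : Set α}

theorem Indep.disjoint_closure_of_disjoint (h : M.Indep (G ∪ A)) (hGA : Disjoint G A) :
    Disjoint G (M.closure A) :=
  Set.disjoint_left.2 fun g hg hgA => Set.disjoint_left.1 hGA hg <| by
    rw [← h.closure_inter_eq_self_of_subset Set.subset_union_right]
    exact ⟨hgA, Or.inl hg⟩

theorem Indep.union_indep_iff_contract_closure_indep (hA : M.Indep A)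
    (hG : Disjoint G (M.closure A)) : M.Indep (G ∪ A) ↔ (M ／ M.closure A).Indep G := by
  rw [contract_closure_eq_contract_delete, delete_indep_iff, hA.contract_indep_iff,
    and_iff_right (hG.mono_right (M.subset_closure A hA.subset_ground)),
    and_iff_left (hG.mono_right Set.sdiff_subset)]

theorem Indep.union_indep_of_closure_eq (hA : M.Indep A) (hA' : M.Indep A')
    (hcl : M.closure A = M.closure A') (h : M.Indep (G ∪ A)) (hGA : Disjoint G A) :
    M.Indep (G ∪ A') ∧ Disjoint G A' := by
  have hG := h.disjoint_closure_of_disjoint hGA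
  rw [hA.union_indep_iff_contract_closure_indep hG, hcl] at h
  rw [hcl] at hG
  exact ⟨(hA'.union_indep_iff_contract_closure_indep hG).2 h,
    hG.mono_right (M.subset_closure A' hA'.subset_ground)⟩

theorem union_indep_closure_eq_iff_of_closure_eq (hA : M.Indep A) (hA' : M.Indep A')
    (hcl : M.closure A = M.closure A') {τ : Set α} :
    (M.Indep (G ∪ A) ∧ M.closure (G ∪ A) = τ ∧ Disjoint G A) ↔
      (M.Indep (G ∪ A') ∧ M.closure (G ∪ A') = τ ∧ Disjoint G A') := by
  rw [M.closure_union_congr_right hcl]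
  constructor
  · rintro ⟨hi, hτ, hd⟩
    obtain ⟨hi', hd'⟩ := hA.union_indep_of_closure_eq hA' hcl hi hd
    exact ⟨hi', hτ, hd'⟩
  · rintro ⟨hi, hτ, hd⟩
    obtain ⟨hi', hd'⟩ := hA'.union_indep_of_closure_eq hA hcl.symm hi hd
    exact ⟨hi', hτ, hd'⟩

theorem exists_indep_finset_closure_eq (M : Matroid α) [M.RankFinite] (X : Set α) :
    ∃ B : Finset α, M.Indep B ∧ M.closure B = M.closure X := by
  obtain ⟨I, hI⟩ := M.exists_isBasis' X
  refine ⟨hI.indep.finite.toFinset, ?_⟩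
  rw [Set.Finite.coe_toFinset]
  exact ⟨hI.indep, hI.closure_eq_closure⟩

end Matroid

theorem Finset.sum_superset_eq_sum_disjoint {α β : Type*} [Fintype α] [DecidableEq α]
    [AddCommMonoid β] (A : Finset α) (f : Finset α → β) :
    ∑ F with A ⊆ F, f F = ∑ G with Disjoint G A, f (G ∪ A) := by
  refine Finset.sum_nbij' (· \ A) (· ∪ A) ?_ ?_ ?_ ?_ ?_ <;>
    intro F hF <;> simp only [Finset.mem_filter, Finset.mem_univ, true_and] at hF ⊢
  · exact Finset.sdiff_disjoint
  · exact Finset.subset_union_right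
  · exact Finset.sdiff_union_of_subset hF
  · exact Finset.union_sdiff_cancel_right hF
  · rw [Finset.sdiff_union_of_subset hF]

section FlatPolynomials

variable {k : Type*} [CommRing k] {E : Type*} [Fintype E] {M : Matroid E}

open scoped Classical in
theorem diffAlgHom_prod_X_flatPoly (A : Finset E) (τ : Set E) :
    diffAlgHom k E (∏ a ∈ A, X a) (flatPoly k M τ) =
      ∑ G : Finset E, if M.Indep ↑(G ∪ A) ∧ M.closure ↑(G ∪ A) = τ ∧ Disjoint G A
        then ∏ e ∈ G, X e else 0 := by
  calc diffAlgHom k E (∏ a ∈ A, X a) (flatPoly k M τ)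
      = ∑ F with A ⊆ F, if M.Indep (F : Set E) ∧ M.closure (F : Set E) = τ
          then ∏ e ∈ F \ A, X e else 0 := by
        rw [flatPoly, map_sum, Finset.sum_filter]
        refine Finset.sum_congr rfl fun F _ => ?_
        split_ifs <;> simp_all [diffAlgHom_prod_X_apply_prod_X]
    _ = ∑ G with Disjoint G A, if M.Indep ↑(G ∪ A) ∧ M.closure ↑(G ∪ A) = τ
          then ∏ e ∈ (G ∪ A) \ A, X e else 0 :=
        Finset.sum_superset_eq_sum_disjoint A _
    _ = _ := by
        rw [Finset.sum_filter]
        refine Finset.sum_congr rfl fun G _ => ?_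
        split_ifs <;> simp_all [Finset.union_sdiff_cancel_right]

theorem diffAlgHom_X_sq_prod_X (e : E) (B : Finset E) :
    diffAlgHom k E (X e ^ 2) (∏ b ∈ B, X b) = 0 := by
  classical
  rw [pow_two, map_mul, Module.End.mul_apply, diffAlgHom_X, Derivation.coeFn_coe,
    pderiv_prod_X]
  split_ifs
  · rw [pderiv_prod_X, if_neg (Finset.notMem_erase e B)]
  · exact map_zero _

theorem X_sq_mem_diffAnnihilator_flatPoly (e : E) (τ : Set E) :
    X e ^ 2 ∈ diffAnnihilator k E (flatPoly k M τ) := by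
  rw [mem_diffAnnihilator, flatPoly, map_sum]
  refine Finset.sum_eq_zero fun F _ => ?_
  split_ifs
  · exact diffAlgHom_X_sq_prod_X e F
  · exact map_zero _

theorem prod_X_mem_diffAnnihilator_flatPoly {S : Finset E} (hS : ¬ M.Indep (S : Set E))
    (τ : Set E) : ∏ e ∈ S, X e ∈ diffAnnihilator k E (flatPoly k M τ) := by
  classical
  rw [mem_diffAnnihilator, diffAlgHom_prod_X_flatPoly]
  refine Finset.sum_eq_zero fun G _ => if_neg fun h => hS (h.1.subset ?_)
  simp

theorem prod_X_sub_prod_X_mem_diffAnnihilator_flatPoly {A A' : Finset E}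
    (hA : M.Indep (A : Set E)) (hA' : M.Indep (A' : Set E))
    (hcl : M.closure (A : Set E) = M.closure (A' : Set E)) (τ : Set E) :
    (∏ e ∈ A, X e) - ∏ e ∈ A', X e ∈ diffAnnihilator k E (flatPoly k M τ) := by
  classical
  rw [mem_diffAnnihilator, map_sub, LinearMap.sub_apply, sub_eq_zero, diffAlgHom_prod_X_flatPoly,
    diffAlgHom_prod_X_flatPoly]
  refine Finset.sum_congr rfl fun G _ => if_congr ?_ rfl rfl
  simpa only [Finset.coe_union, Finset.disjoint_coe] using
    Matroid.union_indep_closure_eq_iff_of_closure_eq (G := (G : Set E)) hA hA' hcl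

theorem span_matroidLambda_le_diffAnnihilator (τ : Set E) :
    Ideal.span (matroidLambda k M) ≤ diffAnnihilator k E (flatPoly k M τ) := by
  rw [Ideal.span_le]
  rintro φ ((⟨e, rfl⟩ | ⟨S, hS, rfl⟩) | ⟨A, A', hA, hA', hcl, rfl⟩)
  · exact X_sq_mem_diffAnnihilator_flatPoly e τ
  · exact prod_X_mem_diffAnnihilator_flatPoly hS τ
  · exact prod_X_sub_prod_X_mem_diffAnnihilator_flatPoly hA hA' hcl τ

theorem coeff_zero_diffAlgHom_prod_X_flatPoly {R : Finset E} (hR : M.Indep (R : Set E))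
    (τ : Set E) :
    coeff 0 (diffAlgHom k E (∏ e ∈ R, X e) (flatPoly k M τ)) =
      if M.closure (R : Set E) = τ then 1 else 0 := by
  rw [diffAlgHom_prod_X_flatPoly, coeff_sum, Finset.sum_eq_single_of_mem ∅ (Finset.mem_univ _)]
  · simp [hR, apply_ite (coeff 0 : MvPolynomial E k → k)]
  · intro G _ hG
    rw [apply_ite (coeff 0), coeff_zero, ← constantCoeff_eq, map_prod]
    simp [zero_pow (Finset.card_ne_zero.2 (Finset.nonempty_iff_ne_empty.2 hG))]

end FlatPolynomials

section Reduction

variable {k : Type*} [CommRing k] {E : Type*} {M : Matroid E}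

theorem monomial_one_eq_prod_X_support {m : E →₀ ℕ} (hm : ∀ e, m e ≤ 1) :
    monomial m (1 : k) = ∏ e ∈ m.support, X e := by
  rw [monomial_eq, C_1, one_mul, Finsupp.prod]
  refine Finset.prod_congr rfl fun e he => ?_
  rw [le_antisymm (hm e) (Nat.one_le_iff_ne_zero.2 (Finsupp.mem_support_iff.1 he)), pow_one]

variable [Fintype E]

theorem monomial_one_mem_span_or_eq_prod_X (m : E →₀ ℕ) :
    monomial m (1 : k) ∈ Ideal.span (matroidLambda k M) ∨
      ∃ S : Finset E, M.Indep (S : Set E) ∧ monomial m (1 : k) = ∏ e ∈ S, X e := by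
  by_cases hsq : ∃ e, 2 ≤ m e
  · obtain ⟨e, he⟩ := hsq
    have hle : Finsupp.single e 2 ≤ m := Finsupp.single_le_iff.2 he
    have hfactor : monomial m (1 : k) = X e ^ 2 * monomial (m - Finsupp.single e 2) 1 := by
      rw [X_pow_eq_monomial, monomial_mul, one_mul, add_tsub_cancel_of_le hle]
    left
    rw [hfactor]
    exact Ideal.mul_mem_right _ _ (Ideal.subset_span (Or.inl (Or.inl ⟨e, rfl⟩)))
  push Not at hsq
  rw [monomial_one_eq_prod_X_support fun e => Nat.le_of_lt_succ (hsq e)]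
  by_cases hm : M.Indep (m.support : Set E)
  · exact Or.inr ⟨m.support, hm, rfl⟩
  · exact Or.inl (Ideal.subset_span (Or.inl (Or.inr ⟨m.support, hm, rfl⟩)))

open scoped Classical in
theorem sub_sum_mem_span_matroidLambda (R : Set E → Finset E)
    (hR : ∀ s, M.Indep (R s : Set E) ∧ M.closure (R s : Set E) = M.closure s)
    (φ : MvPolynomial E k) :
    φ - ∑ τ with M.IsFlat τ, coeff 0 (diffAlgHom k E φ (flatPoly k M τ)) • ∏ e ∈ R τ, X e ∈
      Ideal.span (matroidLambda k M) := by
  induction φ using MvPolynomial.induction_on' with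
  | add p q hp hq =>
    simp only [map_add, LinearMap.add_apply, coeff_add, add_smul, Finset.sum_add_distrib]
    rw [add_sub_add_comm]
    exact Ideal.add_mem _ hp hq
  | monomial m c =>
    rw [← mul_one c, ← smul_eq_mul, ← smul_monomial]
    simp only [map_smul, LinearMap.smul_apply, coeff_smul, smul_eq_mul, mul_smul,
      ← Finset.smul_sum, ← smul_sub]
    refine Submodule.smul_of_tower_mem _ c ?_
    rcases monomial_one_mem_span_or_eq_prod_X (k := k) (M := M) m with hJ | ⟨S, hS, hmS⟩
    · rw [Finset.sum_eq_zero fun τ _ => by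
        rw [(mem_diffAnnihilator _ _).1 (span_matroidLambda_le_diffAnnihilator τ hJ), coeff_zero,
          zero_smul], sub_zero]
      exact hJ
    · simp_rw [hmS, coeff_zero_diffAlgHom_prod_X_flatPoly hS, ite_smul, one_smul, zero_smul]
      rw [Finset.sum_ite_eq, if_pos (Finset.mem_filter.2 ⟨Finset.mem_univ _, M.isFlat_closure _⟩)]
      refine Ideal.subset_span (Or.inr ⟨S, R _, hS, (hR _).1, ?_, rfl⟩)
      rw [(hR _).2, Matroid.closure_closure]

end Reduction

theorem span_lambda_eq_inter_ann_general (k : Type*) [Field k] {E : Type*}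
    [Fintype E] (M : Matroid E) :
    ∀ φ : MvPolynomial E k, φ ∈ Ideal.span (matroidLambda k M) ↔
      ∀ τ : Set E, M.IsFlat τ → diffAct φ (flatPoly k M τ) = 0 := by
  classical
  intro φ
  simp only [diffAct_eq_diffAlgHom]
  refine ⟨fun hφ τ _ => span_matroidLambda_le_diffAnnihilator τ hφ, fun hφ => ?_⟩
  choose R hR using M.exists_indep_finset_closure_eq
  have hφR := sub_sum_mem_span_matroidLambda R hR φ
  rwa [Finset.sum_eq_zero fun τ hτ => by
    rw [hφ τ (Finset.mem_filter.1 hτ).2, coeff_zero, zero_smul], sub_zero] at hφR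

/-- the ideal `J_M` generated by `Λ_M` equals the intersection
`∩_{τ ∈ Ω} Ann f_τ` over all flats `τ` of `M`. -/
theorem span_lambda_eq_inter_ann (k : Type*) [Field k] [CharZero k] {E : Type*}
    [Fintype E] (M : Matroid E) (hE : M.E = Set.univ) :
    ∀ φ : MvPolynomial E k, φ ∈ Ideal.span (matroidLambda k M) ↔
      ∀ τ : Set E, M.IsFlat τ → diffAct φ (flatPoly k M τ) = 0 :=
  span_lambda_eq_inter_ann_general k M
end

section
/- For a matroid M on finite set E, the quotient Q/J_M of the polynomial ring Q = k[X_e : e ∈ E] by the ideal J_M generated by {X_e²}, {X_S : S dependent}, and {X_A − X_{A'} : A, A' independent with equal closure}, has Hilbert series Σ_{i=0}^{r(E)} (number of rank-i flats) · t^i; i.e., dim_k (Q/J_M)_i equals the number of flats of M of rank i. -/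
open MvPolynomial

/-- The rank function of a matroid: `r S = max {|F| : F independent, F ⊆ S}`. -/
noncomputable def matroidRank {α : Type*} (M : Matroid α) (S : Set α) : ℕ :=
  sSup {n : ℕ | ∃ I : Set α, I ⊆ S ∧ M.Indep I ∧ I.ncard = n}

/-!
For a flat `F`, the functional summing the coefficients of the monomials `X_A`, `A` independent
with closure `σ A = F`, kills `J_M`: after multiplication by `X_A` it becomes a sum over the
sets `T` independent in the contraction `M ／ σ A` with `σ (σ A ∪ T) = F`, which depends on `A`
only through `σ A`. So the classes of `X_A`, for one basis `A` of each rank-`i` flat, are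
linearly independent; they also span the degree-`i` part, as every other monomial of degree `i`
lies in `J_M` or is congruent to one of them.
-/

open Finset
open scoped Matroid Classical

section SqfreeExp
variable {σ R : Type*}

noncomputable def sqfreeExp (A : Finset σ) : σ →₀ ℕ := ∑ e ∈ A, Finsupp.single e 1

lemma sqfreeExp_apply (A : Finset σ) (e : σ) : sqfreeExp A e = if e ∈ A then 1 else 0 := by
  simp [sqfreeExp, Finsupp.finsetSum_apply, Finsupp.single_apply]

lemma support_sqfreeExp (A : Finset σ) : (sqfreeExp A).support = A := by
  ext e
  by_cases he : e ∈ A <;> simp [sqfreeExp_apply, he]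

lemma sqfreeExp_injective : Function.Injective (sqfreeExp (σ := σ)) := fun A B h => by
  rw [← support_sqfreeExp A, h, support_sqfreeExp]

lemma sqfreeExp_le_sqfreeExp_iff {A B : Finset σ} : sqfreeExp A ≤ sqfreeExp B ↔ A ⊆ B := by
  simp only [Finsupp.le_def, sqfreeExp_apply]
  refine ⟨fun h e he => ?_, fun h e => ?_⟩
  · by_contra hB
    simpa [he, hB] using h e
  · by_cases he : e ∈ A
    · simp [he, h he]
    · simp [he]

lemma sqfreeExp_sdiff {A B : Finset σ} (h : A ⊆ B) :
    sqfreeExp (B \ A) = sqfreeExp B - sqfreeExp A := by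
  ext e
  by_cases he : e ∈ A
  · simp [sqfreeExp_apply, he, h he]
  · simp [sqfreeExp_apply, he]

lemma degree_sqfreeExp (A : Finset σ) : (sqfreeExp A).degree = #A := by
  simp [sqfreeExp, map_sum]

lemma eq_sqfreeExp_support {d : σ →₀ ℕ} (h : ∀ e, d e ≤ 1) : d = sqfreeExp d.support := by
  ext e
  have := h e
  simp only [sqfreeExp_apply, Finsupp.mem_support_iff]
  split_ifs <;> omega

variable [CommSemiring R]

lemma prod_X_eq_monomial_sqfreeExp (A : Finset σ) :
    ∏ e ∈ A, (X e : MvPolynomial σ R) = monomial (sqfreeExp A) 1 := by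
  rw [sqfreeExp, monomial_sum_one]
  rfl

lemma coeff_sqfreeExp_mul_prod_X (A B : Finset σ) (q : MvPolynomial σ R) :
    coeff (sqfreeExp B) (q * ∏ e ∈ A, X e) =
      if A ⊆ B then coeff (sqfreeExp (B \ A)) q else 0 := by
  rw [prod_X_eq_monomial_sqfreeExp, coeff_mul_monomial', mul_one]
  simp only [sqfreeExp_le_sqfreeExp_iff]
  split_ifs with h
  · rw [sqfreeExp_sdiff h]
  · rfl

lemma coeff_sqfreeExp_mul_X_sq (B : Finset σ) (e : σ) (q : MvPolynomial σ R) :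
    coeff (sqfreeExp B) (q * X e ^ 2) = 0 := by
  rw [X_pow_eq_monomial, coeff_mul_monomial', if_neg]
  rw [Finsupp.single_le_iff, sqfreeExp_apply]
  split_ifs <;> omega

lemma monomial_eq_X_sq_mul {d : σ →₀ ℕ} {e : σ} (h : 2 ≤ d e) :
    monomial d (1 : R) = X e ^ 2 * monomial (d - Finsupp.single e 2) 1 := by
  rw [X_pow_eq_monomial, monomial_mul, one_mul,
    add_tsub_cancel_of_le (Finsupp.single_le_iff.mpr h)]

end SqfreeExp

variable (σ R) in
lemma MvPolynomial.homogeneousSubmodule_eq_span_monomial [CommSemiring R] (n : ℕ) :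
    homogeneousSubmodule σ R n = Submodule.span R ((monomial · 1) '' {d | d.degree = n}) := by
  rw [homogeneousSubmodule_eq_finsupp_supported, AddMonoidAlgebra.supported_eq_span_single]
  rfl

namespace Matroid
variable {α : Type*} {M : Matroid α} {A F T : Set α}

lemma matroidRank_eq_toNat_eRk [M.RankFinite] (X : Set α) :
    matroidRank M X = (M.eRk X).toNat := by
  obtain ⟨I, hI⟩ := M.exists_isBasis' X
  refine IsGreatest.csSup_eq ⟨⟨I, hI.subset, hI.indep, ?_⟩, ?_⟩
  · rw [Set.ncard_def, hI.encard_eq_eRk]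
  · rintro n ⟨J, hJX, hJ, rfl⟩
    exact ENat.toNat_le_toNat (hJ.encard_le_eRk_of_subset hJX) (M.isRkFinite_set X).eRk_lt_top.ne

lemma Indep.matroidRank_closure [M.RankFinite] (hA : M.Indep A) :
    matroidRank M (M.closure A) = A.ncard := by
  rw [matroidRank_eq_toNat_eRk, eRk_closure_eq, hA.eRk_eq_encard, Set.ncard_def]

lemma IsFlat.exists_finset_indep_closure_eq [M.RankFinite] (hF : M.IsFlat F) :
    ∃ A : Finset α, M.Indep A ∧ M.closure A = F ∧ #A = matroidRank M F := by
  obtain ⟨A, hA⟩ := (M.isRkFinite_set F).exists_finset_isBasis'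
  have hcl : M.closure A = F := by rw [hA.closure_eq_closure, hF.closure]
  refine ⟨A, hA.indep, hcl, ?_⟩
  rw [← hcl, hA.indep.matroidRank_closure, Set.ncard_coe_finset]

lemma Indep.disjoint_and_indep_union_iff (hA : M.Indep A) :
    Disjoint A T ∧ M.Indep (A ∪ T) ↔ (M ／ M.closure A).Indep T := by
  rw [hA.isBasis_closure.contract_indep_iff, Set.union_comm]
  refine ⟨fun ⟨hdj, hAT⟩ => ⟨hAT, Set.disjoint_right.mpr fun t ht htA => ?_⟩,
    fun ⟨hAT, hdj⟩ => ⟨hdj.mono_left hA.isBasis_closure.subset, hAT⟩⟩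
  have htA' : t ∉ A := Set.disjoint_right.mp hdj ht
  have hins : M.Indep (insert t A) :=
    hAT.subset (Set.insert_subset (Or.inl ht) Set.subset_union_right)
  exact ((hA.insert_indep_iff_of_notMem htA').mp hins).2 htA

end Matroid

section FlatFunctional
variable {E : Type*} [Fintype E] (k : Type*) [CommRing k] (M : Matroid E)

noncomputable def indepsWithClosure (F : Set E) : Finset (Finset E) :=
  {A | M.Indep A ∧ M.closure A = F}

noncomputable def flatFunctional (F : Set E) : MvPolynomial E k →ₗ[k] k :=
  ∑ A ∈ indepsWithClosure M F, lcoeff k (sqfreeExp A)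

variable {k M} {F : Set E} {A : Finset E}

lemma flatFunctional_apply (p : MvPolynomial E k) :
    flatFunctional k M F p = ∑ A ∈ indepsWithClosure M F, coeff (sqfreeExp A) p := by
  simp [flatFunctional]

lemma flatFunctional_prod_X_of_indep (hA : M.Indep A) :
    flatFunctional k M F (∏ e ∈ A, X e) = if M.closure A = F then 1 else 0 := by
  simp_rw [flatFunctional_apply, prod_X_eq_monomial_sqfreeExp, coeff_monomial,
    sqfreeExp_injective.eq_iff, sum_ite_eq]
  simp [indepsWithClosure, hA]

lemma flatFunctional_mul_prod_X_of_indep (hA : M.Indep A) (q : MvPolynomial E k) :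
    flatFunctional k M F (q * ∏ e ∈ A, X e) =
      ∑ T ∈ ({T | (M ／ M.closure A).Indep T ∧ M.closure (M.closure A ∪ T) = F} :
        Finset (Finset E)), coeff (sqfreeExp T) q := by
  simp_rw [flatFunctional_apply, coeff_sqfreeExp_mul_prod_X, ← sum_filter]
  refine sum_bij' (fun B _ => B \ A) (fun T _ => A ∪ T) ?_ ?_ ?_ ?_ (fun _ _ => rfl)
  · intro B hB
    simp only [indepsWithClosure, mem_filter, mem_univ, true_and] at hB ⊢
    obtain ⟨⟨hBi, hBcl⟩, hAB⟩ := hB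
    have hunion : (A : Set E) ∪ ↑(B \ A) = B := by
      rw [← coe_union, union_sdiff_of_subset hAB]
    rw [← hA.disjoint_and_indep_union_iff, Matroid.closure_union_closure_left_eq, hunion]
    exact ⟨⟨disjoint_coe.mpr disjoint_sdiff, hBi⟩, hBcl⟩
  · intro T hT
    simp only [indepsWithClosure, mem_filter, mem_univ, true_and, coe_union] at hT ⊢
    rw [← hA.disjoint_and_indep_union_iff, Matroid.closure_union_closure_left_eq] at hT
    exact ⟨⟨hT.1.2, hT.2⟩, subset_union_left⟩
  · intro B hB
    exact union_sdiff_of_subset (mem_filter.mp hB).2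
  · intro T hT
    simp only [mem_filter, mem_univ, true_and] at hT
    rw [← hA.disjoint_and_indep_union_iff] at hT
    exact union_sdiff_cancel_left (disjoint_coe.mp hT.1.1)

end FlatFunctional

section Vanishing
variable {E : Type*} [Fintype E] {k : Type*} [CommRing k] {M : Matroid E} {F : Set E}

lemma flatFunctional_mul_eq_zero_of_mem_matroidLambda {g : MvPolynomial E k}
    (hg : g ∈ matroidLambda k M) (q : MvPolynomial E k) : flatFunctional k M F (q * g) = 0 := by
  rcases hg with (⟨e, rfl⟩ | ⟨S, hS, rfl⟩) | ⟨A, A', hA, hA', hcl, rfl⟩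
  · simp [flatFunctional_apply, coeff_sqfreeExp_mul_X_sq]
  · refine (flatFunctional_apply _).trans (sum_eq_zero fun B hB => ?_)
    rw [coeff_sqfreeExp_mul_prod_X, if_neg]
    simp only [indepsWithClosure, mem_filter] at hB
    exact fun hSB => hS (hB.2.1.subset (coe_subset.mpr hSB))
  · rw [mul_sub, map_sub, flatFunctional_mul_prod_X_of_indep hA,
      flatFunctional_mul_prod_X_of_indep hA', hcl, sub_self]

lemma flatFunctional_eq_zero_of_mem {p : MvPolynomial E k}
    (hp : p ∈ Ideal.span (matroidLambda k M)) : flatFunctional k M F p = 0 := by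
  obtain ⟨n, c, g, rfl⟩ := Submodule.mem_span_set'.mp hp
  simp only [map_sum, smul_eq_mul, flatFunctional_mul_eq_zero_of_mem_matroidLambda (g _).2,
    sum_const_zero]

end Vanishing

section Quotient
variable {E : Type*} [Fintype E] (k : Type*) [CommRing k] {M : Matroid E} {i : ℕ}

local notation "π" => Ideal.Quotient.mkₐ k (Ideal.span (matroidLambda k M))

lemma mkₐ_eq_zero_of_mem_matroidLambda {g : MvPolynomial E k} (hg : g ∈ matroidLambda k M) :
    π g = 0 := by
  rw [Ideal.Quotient.mkₐ_eq_mk, Ideal.Quotient.eq_zero_iff_mem]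
  exact Ideal.subset_span hg

lemma linearIndependent_mkₐ_prod_X {ι : Type*} {B : ι → Finset E} (hB : ∀ j, M.Indep (B j))
    (hinj : Function.Injective fun j => M.closure (B j)) :
    LinearIndependent k fun j => π (∏ e ∈ B j, X e) := by
  rw [linearIndependent_iff']
  intro s c hc j hj
  have hmem : ∑ j ∈ s, c j • ∏ e ∈ B j, X e ∈ Ideal.span (matroidLambda k M) := by
    rw [← Ideal.Quotient.eq_zero_iff_mem, ← Ideal.Quotient.mkₐ_eq_mk k, map_sum]
    simpa only [map_smul] using hc
  have := flatFunctional_eq_zero_of_mem (F := M.closure (B j)) hmem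
  simpa [flatFunctional_prod_X_of_indep (hB _), hinj.eq_iff, hj] using this


lemma mkₐ_monomial_mem_span {B : {τ : Set E // M.IsFlat τ ∧ matroidRank M τ = i} → Finset E}
    (hB : ∀ F, M.Indep (B F) ∧ M.closure (B F) = F.1) {d : E →₀ ℕ} (hd : d.degree = i) :
    π (monomial d 1) ∈ Submodule.span k (Set.range fun F => π (∏ e ∈ B F, X e)) := by
  by_cases hsq : ∀ e, d e ≤ 1
  swap
  · obtain ⟨e, he⟩ := not_forall.mp hsq
    rw [monomial_eq_X_sq_mul (not_le.mp he), map_mul,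
      mkₐ_eq_zero_of_mem_matroidLambda k (Or.inl (Or.inl ⟨e, rfl⟩)), zero_mul]
    exact Submodule.zero_mem _
  set S := d.support
  rw [eq_sqfreeExp_support hsq, ← prod_X_eq_monomial_sqfreeExp]
  by_cases hS : M.Indep S
  swap
  · rw [mkₐ_eq_zero_of_mem_matroidLambda k (Or.inl (Or.inr ⟨S, hS, rfl⟩))]
    exact Submodule.zero_mem _
  have hrank : matroidRank M (M.closure S) = i := by
    rw [hS.matroidRank_closure, Set.ncard_coe_finset, ← degree_sqfreeExp,
      ← eq_sqfreeExp_support hsq, hd]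
  set F : {τ : Set E // M.IsFlat τ ∧ matroidRank M τ = i} :=
    ⟨M.closure S, Matroid.isFlat_closure _, hrank⟩
  have hgen : ∏ e ∈ S, X e - ∏ e ∈ B F, X e ∈ matroidLambda k M :=
    Or.inr ⟨S, B F, hS, (hB F).1, (hB F).2.symm, rfl⟩
  have heq : π (∏ e ∈ S, X e) = π (∏ e ∈ B F, X e) :=
    sub_eq_zero.mp (by rw [← map_sub]; exact mkₐ_eq_zero_of_mem_matroidLambda k hgen)
  rw [heq]
  exact Submodule.subset_span ⟨F, rfl⟩

lemma map_homogeneousSubmodule_eq_span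
    {B : {τ : Set E // M.IsFlat τ ∧ matroidRank M τ = i} → Finset E}
    (hB : ∀ F, M.Indep (B F) ∧ M.closure (B F) = F.1) (hcard : ∀ F, #(B F) = i) :
    (homogeneousSubmodule E k i).map (π).toLinearMap =
      Submodule.span k (Set.range fun F => π (∏ e ∈ B F, X e)) := by
  refine le_antisymm ?_ (Submodule.span_le.mpr ?_)
  · rw [homogeneousSubmodule_eq_span_monomial, Submodule.map_span_le]
    rintro _ ⟨d, hd, rfl⟩
    exact mkₐ_monomial_mem_span k hB hd
  · rintro _ ⟨F, rfl⟩
    refine ⟨∏ e ∈ B F, X e, ?_, rfl⟩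
    rw [SetLike.mem_coe, mem_homogeneousSubmodule, prod_X_eq_monomial_sqfreeExp]
    exact isHomogeneous_monomial _ (by rw [degree_sqfreeExp, hcard])

end Quotient

theorem hilbert_function_of_JM_general (k : Type*) [Field k] {E : Type*} [Fintype E]
    (M : Matroid E) (i : ℕ) :
    Module.finrank k
        ((homogeneousSubmodule E k i).map
          (Ideal.Quotient.mkₐ k (Ideal.span (matroidLambda k M))).toLinearMap) =
      Nat.card {τ : Set E // M.IsFlat τ ∧ matroidRank M τ = i} := by
  choose B hBi hBcl hBcard using
    fun F : {τ : Set E // M.IsFlat τ ∧ matroidRank M τ = i} =>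
      F.2.1.exists_finset_indep_closure_eq
  have hcard : ∀ F, #(B F) = i := fun F => (hBcard F).trans F.2.2
  have hinj : Function.Injective fun F => M.closure (B F) := fun F G h =>
    Subtype.ext ((hBcl F).symm.trans (h.trans (hBcl G)))
  have := Fintype.ofFinite {τ : Set E // M.IsFlat τ ∧ matroidRank M τ = i}
  rw [map_homogeneousSubmodule_eq_span k (fun F => ⟨hBi F, hBcl F⟩) hcard,
    finrank_span_eq_card (linearIndependent_mkₐ_prod_X k hBi hinj), Nat.card_eq_fintype_card]

/-- the `i`-th graded piece of `Q/J_M` has dimension equal to the number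
of rank-`i` flats of `M`, i.e. the Hilbert series of `Q/J_M` is
`Σ_i (#rank-i flats) tⁱ`. -/
theorem hilbert_function_of_JM (k : Type*) [Field k] {E : Type*} [Fintype E]
    (M : Matroid E) (hE : M.E = Set.univ) (i : ℕ) :
    Module.finrank k
        ((homogeneousSubmodule E k i).map
          (Ideal.Quotient.mkₐ k (Ideal.span (matroidLambda k M))).toLinearMap) =
      Nat.card {τ : Set E // M.IsFlat τ ∧ matroidRank M τ = i} :=
  hilbert_function_of_JM_general k M i
end
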